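/- arXiv:1901.03803 — 8 statements merged into one kernel-verified Lean document; each statement's English description precedes it below -/
import Mathlib

section
/- Let H be a complex Hilbert space, (X,μ) a σ-finite measure space, and f : X → H a weakly measurable map such that for every h ∈ H the scalar function x ↦ ⟨h, f(x)⟩ belongs to L²(X,μ). Then sup over h with ‖h‖ = 1 of the L²-norm of x ↦ ⟨h, f(x)⟩ is finite; equivalently, there exists B < ∞ such that ∫_X |⟨h, f(x)⟩|² dμ(x) ≤ B‖h‖² for all h ∈ H, i.e., f is a c-Bessel mapping for H. -/
open MeasureTheory Filter Topology
open scoped ENNReal NNReal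

/-! Pairing with `f x` defines a real-linear map `T : H → L²(μ)`. If `T hₙ → h` in `H` and
`T hₙ → g` in `L²`, a subsequence of `T hₙ` converges to `g` almost everywhere, while
`T hₙ x → T h x` for every `x` by continuity of the inner product; hence `g = T h`. So `T` has
closed graph and is bounded by the closed graph theorem, which is the Bessel bound. -/

theorem MeasureTheory.lintegral_enorm_sq_eq_eLpNorm_sq {X F : Type*} [MeasurableSpace X]
    {μ : Measure X} [NormedAddCommGroup F] (g : X → F) :
    ∫⁻ x, ‖g x‖ₑ ^ 2 ∂μ = eLpNorm g 2 μ ^ 2 := by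
  rw [eLpNorm_eq_eLpNorm' two_ne_zero ENNReal.ofNat_ne_top, ENNReal.toReal_ofNat,
    ← ENNReal.rpow_two, ← lintegral_rpow_enorm_eq_rpow_eLpNorm' two_pos]
  simp only [ENNReal.rpow_two]

namespace LinearMap

variable {𝕜 E F X : Type*} [NontriviallyNormedField 𝕜] [NormedAddCommGroup E] [NormedSpace 𝕜 E]
  [NormedAddCommGroup F] [NormedSpace 𝕜 F] [MeasurableSpace X] {μ : Measure X}
  {p : ℝ≥0∞} [Fact (1 ≤ p)]

noncomputable def toLp (T : E →ₗ[𝕜] X → F) (hT : ∀ e, MemLp (T e) p μ) :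
    E →ₗ[𝕜] Lp F p μ where
  toFun e := (hT e).toLp
  map_add' e e' := by
    rw [← MemLp.toLp_add]
    exact MemLp.toLp_congr _ _ (.of_eq (T.map_add e e'))
  map_smul' c e := by
    rw [RingHom.id_apply, ← MemLp.toLp_const_smul]
    exact MemLp.toLp_congr _ _ (.of_eq (T.map_smul c e))

theorem continuous_toLp [CompleteSpace E] [CompleteSpace F] (T : E →ₗ[𝕜] X → F)
    (hT : ∀ e, MemLp (T e) p μ) (hcont : ∀ᵐ x ∂μ, Continuous fun e => T e x) :
    Continuous (T.toLp hT) := by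
  refine (T.toLp hT).continuous_of_seq_closed_graph fun u e g hu hTu => ?_
  obtain ⟨ns, hns, hae⟩ := (tendstoInMeasure_of_tendsto_Lp hTu).exists_seq_tendsto_ae
  have hg : g =ᵐ[μ] T e := by
    filter_upwards [hae, hcont, (hT e).coeFn_toLp, ae_all_iff.2 fun n => (hT (u n)).coeFn_toLp]
      with x hx hxcont hTe hTu
    refine tendsto_nhds_unique hx ?_
    simp only [Function.comp_apply, toLp, coe_mk, AddHom.coe_mk, hTu]
    exact (hxcont.tendsto e).comp (hu.comp hns.tendsto_atTop)
  exact Lp.ext (hg.trans (hT e).coeFn_toLp.symm)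

theorem exists_eLpNorm_le_mul_enorm [CompleteSpace E] [CompleteSpace F] (T : E →ₗ[𝕜] X → F)
    (hT : ∀ e, MemLp (T e) p μ) (hcont : ∀ᵐ x ∂μ, Continuous fun e => T e x) :
    ∃ C : ℝ≥0, ∀ e, eLpNorm (T e) p μ ≤ C * ‖e‖ₑ := by
  let S : E →L[𝕜] Lp F p μ := ⟨T.toLp hT, T.continuous_toLp hT hcont⟩
  refine ⟨‖S‖₊, fun e => ?_⟩
  rw [← Lp.enorm_toLp (hT e)]
  exact S.le_opENorm e

end LinearMap

theorem cBessel_of_weakly_measurable_memL2_general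
    {H : Type*} [NormedAddCommGroup H] [InnerProductSpace ℂ H] [CompleteSpace H]
    {X : Type*} [MeasurableSpace X] (μ : Measure X)
    (f : X → H)
    (hL2 : ∀ h : H, MemLp (fun x => (inner ℂ h (f x) : ℂ)) 2 μ) :
    ∃ B : ℝ, ∀ h : H,
      ∫⁻ x, (‖(inner ℂ h (f x) : ℂ)‖₊ : ℝ≥0∞) ^ 2 ∂μ ≤ ENNReal.ofReal (B * ‖h‖ ^ 2) := by
  have : Fact (1 ≤ (2 : ℝ≥0∞)) := ⟨one_le_two⟩
  let T : H →ₗ[ℝ] X → ℂ :=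
    { toFun h x := inner ℂ h (f x)
      map_add' h h' := funext fun x => inner_add_left h h' (f x)
      map_smul' r h := funext fun x => by
        change inner ℂ (r • h) (f x) = r • inner ℂ h (f x)
        rw [RCLike.real_smul_eq_coe_smul (K := ℂ), inner_smul_real_left] }
  obtain ⟨C, hC⟩ := T.exists_eLpNorm_le_mul_enorm hL2
    (.of_forall fun x => continuous_id.inner continuous_const)
  refine ⟨C ^ 2, fun h => ?_⟩
  calc ∫⁻ x, (‖(inner ℂ h (f x) : ℂ)‖₊ : ℝ≥0∞) ^ 2 ∂μ
      = eLpNorm (T h) 2 μ ^ 2 := lintegral_enorm_sq_eq_eLpNorm_sq _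
    _ ≤ (C * ‖h‖ₑ) ^ 2 := by gcongr; exact hC h
    _ = ENNReal.ofReal (C ^ 2 * ‖h‖ ^ 2) := by
      rw [ENNReal.ofReal_mul (by positivity), ← ofReal_norm]
      simp [ENNReal.ofReal_pow, mul_pow]

/-- If `f : X → H` is weakly measurable on a σ-finite measure space and
`x ↦ ⟨h, f x⟫` is in `L²(X, μ)` for every `h ∈ H`, then `f` is a c-Bessel mapping:
there is `B` with `∫ |⟨h, f x⟩|² dμ ≤ B ‖h‖²` for all `h`. -/
theorem cBessel_of_weakly_measurable_memL2
    {H : Type*} [NormedAddCommGroup H] [InnerProductSpace ℂ H] [CompleteSpace H]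
    {X : Type*} [MeasurableSpace X] (μ : Measure X) [SigmaFinite μ]
    (f : X → H)
    (hmeas : ∀ h : H, Measurable fun x => (inner ℂ h (f x) : ℂ))
    (hL2 : ∀ h : H, MemLp (fun x => (inner ℂ h (f x) : ℂ)) 2 μ) :
    ∃ B : ℝ, ∀ h : H,
      ∫⁻ x, (‖(inner ℂ h (f x) : ℂ)‖₊ : ℝ≥0∞) ^ 2 ∂μ ≤ ENNReal.ofReal (B * ‖h‖ ^ 2) :=
  cBessel_of_weakly_measurable_memL2_general μ f hL2
end

section
/- Let H be a complex Hilbert space, (X,μ) a σ-finite measure space, and f : X → H weakly measurable. Then f is a c-Bessel mapping for H if and only if for every g ∈ L²(X,μ) the weak integral ∫_X g f dμ exists in H, i.e., there exists v ∈ H such that ⟨v, h⟩ = ∫_X g(x)⟨f(x), h⟩ dμ(x) for all h ∈ H. -/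
/-!
If the Bessel bound holds, `h ↦ ⟪f ·, h⟫` is a bounded operator `T : H → L²(μ)`, and the weak
integral of `g` is `T* ḡ`. Conversely, if all weak integrals exist then each `⟪f ·, h⟫` pairs
integrably with all of `L²(μ)`, which by the uniform boundedness principle (applied to its
truncations on sets of finite measure where it is bounded) forces `⟪f ·, h⟫ ∈ L²(μ)`. The closed
graph theorem then makes `T` bounded, and `‖T‖²` is a Bessel bound.
-/

open MeasureTheory Filter
open scoped ENNReal InnerProductSpace

section

variable {X : Type*} [MeasurableSpace X] {μ : Measure X}

lemma eLpNorm_two_sq_eq_lintegral {E : Type*} [NormedAddCommGroup E] (q : X → E) :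
    eLpNorm q 2 μ ^ 2 = ∫⁻ x, ‖q x‖ₑ ^ 2 ∂μ := by
  simpa using eLpNorm_nnreal_pow_eq_lintegral (f := q) (μ := μ) (p := 2) two_ne_zero

lemma memLp_indicator_of_norm_le {E : Type*} [NormedAddCommGroup E] {p : ℝ≥0∞} {s : Set X}
    (hs : MeasurableSet s) (hμs : μ s ≠ ∞) {q : X → E} (hq : AEStronglyMeasurable q μ) {C : ℝ}
    (hqC : ∀ x ∈ s, ‖q x‖ ≤ C) : MemLp (s.indicator q) p μ := by
  have : Fact (μ s < ∞) := ⟨hμs.lt_top⟩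
  rw [memLp_indicator_iff_restrict hs]
  exact MemLp.of_bound hq.restrict C ((ae_restrict_iff' hs).2 (Eventually.of_forall hqC))

variable {𝕜 : Type*} [RCLike 𝕜]

lemma norm_inner_le_integral_norm_mul {u : Lp 𝕜 2 μ} {k : X → 𝕜}
    (hu : ∀ᵐ x ∂μ, ‖u x‖ ≤ ‖k x‖) {g : Lp 𝕜 2 μ} (hgk : Integrable (fun x => g x * k x) μ) :
    ‖⟪u, g⟫_𝕜‖ ≤ ∫ x, ‖g x * k x‖ ∂μ := by
  rw [L2.inner_def]
  refine (norm_integral_le_integral_norm _).trans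
    (integral_mono_ae (L2.integrable_inner u g).norm hgk.norm ?_)
  filter_upwards [hu] with x hx
  calc ‖⟪u x, g x⟫_𝕜‖ ≤ ‖u x‖ * ‖g x‖ := norm_inner_le_norm _ _
    _ ≤ ‖k x‖ * ‖g x‖ := by gcongr
    _ = ‖g x * k x‖ := by rw [norm_mul, mul_comm]

theorem memLp_two_of_forall_integrable_mul [SigmaFinite μ] {k : X → 𝕜}
    (hk : AEStronglyMeasurable k μ) (hgk : ∀ g : Lp 𝕜 2 μ, Integrable (fun x => g x * k x) μ) :
    MemLp k 2 μ := by
  wlog hk' : StronglyMeasurable k generalizing k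
  · refine (this hk.stronglyMeasurable_mk.aestronglyMeasurable (fun g => (hgk g).congr ?_)
      hk.stronglyMeasurable_mk).ae_eq hk.ae_eq_mk.symm
    filter_upwards [hk.ae_eq_mk] with x hx
    rw [hx]
  set E : ℕ → Set X := fun n => spanningSets μ n ∩ {x | ‖k x‖ ≤ n}
  have hE : ∀ n, MeasurableSet (E n) := fun n =>
    (measurableSet_spanningSets μ n).inter (measurableSet_le hk'.measurable.norm measurable_const)
  have hEk : ∀ n, MemLp ((E n).indicator k) 2 μ := fun n =>
    memLp_indicator_of_norm_le (hE n) (measure_inter_lt_top_of_left_ne_top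
      (measure_spanningSets_lt_top μ n).ne).ne hk (fun x hx => hx.2)
  let w : ℕ → Lp 𝕜 2 μ := fun n => (hEk n).toLp
  obtain ⟨C, hC⟩ : ∃ C, ∀ n, ‖innerSL 𝕜 (w n)‖ ≤ C := by
    refine banach_steinhaus fun g => ⟨∫ x, ‖g x * k x‖ ∂μ, fun n => ?_⟩
    refine norm_inner_le_integral_norm_mul ?_ (hgk g)
    filter_upwards [(hEk n).coeFn_toLp] with x hx
    rw [hx]
    exact norm_indicator_le_norm_self k x
  have hEx : ∀ x, ∀ᶠ n in atTop, x ∈ E n := fun x =>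
    (eventually_mem_spanningSets μ x).and
      ((eventually_ge_atTop ⌈‖k x‖⌉₊).mono fun n hn => Nat.ceil_le.1 hn)
  refine ⟨hk, (Lp.eLpNorm_le_of_ae_tendsto (u := atTop) (C := ENNReal.ofReal C)
    (Eventually.of_forall fun n => ?_) (fun n => (hEk n).1) (ae_of_all _ fun x => ?_)).trans_lt
    ENNReal.ofReal_lt_top⟩
  · rw [← eLpNorm_congr_ae (hEk n).coeFn_toLp, ← Lp.enorm_def, ← ofReal_norm,
      ← innerSL_apply_norm 𝕜]
    exact ENNReal.ofReal_le_ofReal (hC n)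
  · exact tendsto_const_nhds.congr' ((hEx x).mono fun n hn => (Set.indicator_of_mem hn k).symm)

variable {H : Type*} [NormedAddCommGroup H] [InnerProductSpace 𝕜 H]

def HasWeakIntegral (g : X → 𝕜) (f : X → H) (μ : Measure X) (v : H) : Prop :=
  (∀ h, Integrable (fun x => g x * ⟪f x, h⟫_𝕜) μ) ∧ ∀ h, ⟪v, h⟫_𝕜 = ∫ x, g x * ⟪f x, h⟫_𝕜 ∂μ

noncomputable def analysisOperatorₗ (f : X → H) (hf : ∀ h, MemLp (fun x => ⟪f x, h⟫_𝕜) 2 μ) :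
    H →ₗ[𝕜] Lp 𝕜 2 μ where
  toFun h := (hf h).toLp
  map_add' a b := by
    rw [← MemLp.toLp_add]
    exact MemLp.toLp_congr _ _ (ae_of_all _ fun x => inner_add_right _ _ _)
  map_smul' c a := by
    rw [RingHom.id_apply, ← MemLp.toLp_const_smul]
    exact MemLp.toLp_congr _ _ (ae_of_all _ fun x => inner_smul_right _ _ _)

variable {f : X → H} {hf : ∀ h, MemLp (fun x => ⟪f x, h⟫_𝕜) 2 μ}

lemma coeFn_analysisOperatorₗ (h : H) :
    analysisOperatorₗ f hf h =ᵐ[μ] fun x => ⟪f x, h⟫_𝕜 :=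
  (hf h).coeFn_toLp

-- closed graph: an `L²` limit has an a.e. convergent subsequence, and `h ↦ ⟪f x, h⟫` is continuous
lemma continuous_analysisOperatorₗ [CompleteSpace H] : Continuous (analysisOperatorₗ f hf) := by
  refine (analysisOperatorₗ f hf).continuous_of_seq_closed_graph fun u h w hu hw => ?_
  obtain ⟨ns, hns, hae⟩ := (tendstoInMeasure_of_tendsto_Lp hw).exists_seq_tendsto_ae
  have hcoe := ae_all_iff.2 fun i => coeFn_analysisOperatorₗ (hf := hf) (u (ns i))
  refine Lp.ext (EventuallyEq.trans ?_ (coeFn_analysisOperatorₗ h).symm)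
  filter_upwards [hae, hcoe] with x hx hxu
  refine tendsto_nhds_unique (hx.congr hxu) ?_
  exact ((continuous_const.inner continuous_id).tendsto h).comp (hu.comp hns.tendsto_atTop)

variable [CompleteSpace H]

variable (f hf) in
noncomputable def analysisOperator : H →L[𝕜] Lp 𝕜 2 μ :=
  ⟨analysisOperatorₗ f hf, continuous_analysisOperatorₗ⟩

lemma coeFn_analysisOperator (h : H) :
    analysisOperator f hf h =ᵐ[μ] fun x => ⟪f x, h⟫_𝕜 :=
  coeFn_analysisOperatorₗ h

lemma eLpNorm_inner_le (h : H) :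
    eLpNorm (fun x => ⟪f x, h⟫_𝕜) 2 μ ≤ ENNReal.ofReal (‖analysisOperator f hf‖ * ‖h‖) := by
  rw [← eLpNorm_congr_ae (coeFn_analysisOperator (hf := hf) h), ← Lp.enorm_def, ← ofReal_norm]
  exact ENNReal.ofReal_le_ofReal ((analysisOperator f hf).le_opNorm h)

lemma hasWeakIntegral_adjoint_analysisOperator (g : Lp 𝕜 2 μ) :
    HasWeakIntegral (g : X → 𝕜) f μ ((analysisOperator f hf).adjoint (star g)) := by
  have hae : ∀ h, (fun x => ⟪(star g) x, analysisOperator f hf h x⟫_𝕜) =ᵐ[μ]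
      fun x => g x * ⟪f x, h⟫_𝕜 := fun h => by
    filter_upwards [Lp.coeFn_star g, coeFn_analysisOperator (hf := hf) h] with x hg hx
    rw [hg, hx, RCLike.inner_apply, Pi.star_apply, RCLike.star_def, RCLike.conj_conj, mul_comm]
  refine ⟨fun h => (L2.integrable_inner _ _).congr (hae h), fun h => ?_⟩
  rw [ContinuousLinearMap.adjoint_inner_left, L2.inner_def]
  exact integral_congr_ae (hae h)

end

/-- A weakly measurable `f : X → H` is a c-Bessel mapping for `H` iff
for every `g ∈ L²(X, μ)` the weak integral `∫_X g f dμ` exists in `H`, i.e. there is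
`v ∈ H` with `⟨v, h⟩ = ∫ g x ⟨f x, h⟩ dμ` for all `h ∈ H` (existence including
integrability of the scalar integrands). -/
theorem cBessel_iff_weak_integral_exists
    {H : Type*} [NormedAddCommGroup H] [InnerProductSpace ℂ H] [CompleteSpace H]
    {X : Type*} [MeasurableSpace X] (μ : Measure X) [SigmaFinite μ]
    (f : X → H)
    (hmeas : ∀ h : H, Measurable fun x => (inner ℂ h (f x) : ℂ)) :
    (∃ B : ℝ, ∀ h : H,
        ∫⁻ x, (‖(inner ℂ h (f x) : ℂ)‖₊ : ℝ≥0∞) ^ 2 ∂μ ≤ ENNReal.ofReal (B * ‖h‖ ^ 2)) ↔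
      (∀ g : Lp ℂ 2 μ, ∃ v : H,
        (∀ h : H, Integrable (fun x => (g : X → ℂ) x * (inner ℂ (f x) h : ℂ)) μ) ∧
        (∀ h : H, (inner ℂ v h : ℂ) = ∫ x, (g : X → ℂ) x * (inner ℂ (f x) h : ℂ) ∂μ)) := by
  have hmeas_symm : ∀ h, AEStronglyMeasurable (fun x => ⟪f x, h⟫_ℂ) μ := fun h =>
    (hmeas h).aestronglyMeasurable.star.congr (ae_of_all _ fun x => inner_conj_symm (f x) h)
  have hsq : ∀ h, ∫⁻ x, (‖⟪h, f x⟫_ℂ‖₊ : ℝ≥0∞) ^ 2 ∂μ = eLpNorm (fun x => ⟪f x, h⟫_ℂ) 2 μ ^ 2 :=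
    fun h => by
      rw [eLpNorm_two_sq_eq_lintegral]
      exact lintegral_congr fun x => by rw [← enorm_eq_nnnorm, ← ofReal_norm, ← ofReal_norm,
        norm_inner_symm]
  constructor
  · rintro ⟨B, hB⟩ g
    have hL2 : ∀ h, MemLp (fun x => ⟪f x, h⟫_ℂ) 2 μ := fun h =>
      ⟨hmeas_symm h, by simpa [hsq] using (hB h).trans_lt ENNReal.ofReal_lt_top⟩
    exact ⟨_, hasWeakIntegral_adjoint_analysisOperator (hf := hL2) g⟩
  · intro hv
    have hL2 : ∀ h, MemLp (fun x => ⟪f x, h⟫_ℂ) 2 μ := fun h =>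
      memLp_two_of_forall_integrable_mul (hmeas_symm h) fun g => (hv g).choose_spec.1 h
    refine ⟨‖analysisOperator f hL2‖ ^ 2, fun h => ?_⟩
    rw [hsq, ← mul_pow, ENNReal.ofReal_pow (by positivity)]
    exact pow_le_pow_left' (eLpNorm_inner_le h) 2
end

section
/- Let H and H₀ be complex Hilbert spaces, (X,μ) a σ-finite measure space, k : H₀ → H a bounded linear operator, and f : X → H a c-Bessel mapping for H. Suppose there exists a bounded linear operator M : H₀ → L²(X,μ) such that ⟨k h₀, h⟩ = ∫_X (M h₀)(x) ⟨f(x), h⟩ dμ(x) for all h₀ ∈ H₀ and h ∈ H. Then f is a ck-frame for H with respect to H₀, i.e., there exists A > 0 such that A‖k*(h)‖² ≤ ∫_X |⟨h, f(x)⟩|² dμ(x) for all h ∈ H. -/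
/-!
For `h : H` the coefficient function `φ = (x ↦ ⟪h, f x⟫)` lies in `L²(μ)` by the Bessel bound,
and the factorization says `⟪k h₀, h⟫ = ⟪φ, M h₀⟫`. Taking `h₀ = k† h` gives
`‖k† h‖² = ⟪φ, M (k† h)⟫ ≤ ‖φ‖ ‖M‖ ‖k† h‖`, hence `‖k† h‖ ≤ ‖M‖ ‖φ‖`, and `A = (‖M‖ + 1)⁻²`
works (the `+ 1` keeps `A` positive when `M = 0`).
-/

open MeasureTheory
open scoped ENNReal InnerProductSpace

namespace MeasureTheory

section
variable {α E : Type*} [MeasurableSpace α] {μ : Measure α} [NormedAddCommGroup E]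

theorem eLpNorm_two_sq_eq_lintegral (f : α → E) :
    eLpNorm f 2 μ ^ 2 = ∫⁻ x, ‖f x‖ₑ ^ 2 ∂μ := by
  simpa using eLpNorm_nnreal_pow_eq_lintegral (μ := μ) (f := f) (p := 2) two_ne_zero

theorem memLp_two_of_lintegral_sq_lt_top {f : α → E} (hf : AEStronglyMeasurable f μ)
    (hfin : ∫⁻ x, ‖f x‖ₑ ^ 2 ∂μ < ∞) : MemLp f 2 μ := by
  refine ⟨hf, ?_⟩
  rw [← eLpNorm_two_sq_eq_lintegral] at hfin
  exact (ENNReal.pow_lt_top_iff.1 hfin).resolve_right two_ne_zero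

theorem MemLp.ofReal_sq_norm_toLp {f : α → E} (hf : MemLp f 2 μ) :
    ENNReal.ofReal (‖hf.toLp f‖ ^ 2) = ∫⁻ x, ‖f x‖ₑ ^ 2 ∂μ := by
  rw [Lp.norm_toLp, ENNReal.ofReal_pow ENNReal.toReal_nonneg,
    ENNReal.ofReal_toReal hf.eLpNorm_ne_top, eLpNorm_two_sq_eq_lintegral]

end

theorem L2.inner_toLp_left {α 𝕜 E : Type*} [MeasurableSpace α] {μ : Measure α} [RCLike 𝕜]
    [NormedAddCommGroup E] [InnerProductSpace 𝕜 E] {f : α → E} (hf : MemLp f 2 μ)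
    (g : Lp E 2 μ) : ⟪hf.toLp f, g⟫_𝕜 = ∫ x, ⟪f x, g x⟫_𝕜 ∂μ := by
  rw [L2.inner_def]
  refine integral_congr_ae ?_
  filter_upwards [hf.coeFn_toLp] with x hx
  rw [hx]

end MeasureTheory

theorem norm_le_opNorm_mul_of_inner_self_eq {𝕜 E F : Type*} [RCLike 𝕜]
    [NormedAddCommGroup E] [InnerProductSpace 𝕜 E] [NormedAddCommGroup F] [InnerProductSpace 𝕜 F]
    (T : E →L[𝕜] F) {v : E} {φ : F} (h : ⟪v, v⟫_𝕜 = ⟪φ, T v⟫_𝕜) : ‖v‖ ≤ ‖T‖ * ‖φ‖ := by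
  rcases (norm_nonneg v).eq_or_lt with hv | hv
  · rw [← hv]; positivity
  refine le_of_mul_le_mul_right ?_ hv
  calc ‖v‖ * ‖v‖ = ‖⟪φ, T v⟫_𝕜‖ := by
        rw [← h, inner_self_eq_norm_sq_to_K, norm_pow, RCLike.norm_ofReal, abs_norm, sq]
    _ ≤ ‖φ‖ * ‖T v‖ := norm_inner_le_norm _ _
    _ ≤ ‖φ‖ * (‖T‖ * ‖v‖) := by gcongr; exact T.le_opNorm v
    _ = ‖T‖ * ‖φ‖ * ‖v‖ := by ring

theorem norm_adjoint_apply_le_of_inner_apply_eq {𝕜 H H₀ F : Type*} [RCLike 𝕜]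
    [NormedAddCommGroup H] [InnerProductSpace 𝕜 H] [CompleteSpace H]
    [NormedAddCommGroup H₀] [InnerProductSpace 𝕜 H₀] [CompleteSpace H₀]
    [NormedAddCommGroup F] [InnerProductSpace 𝕜 F]
    (k : H₀ →L[𝕜] H) (T : H₀ →L[𝕜] F) {h : H} {φ : F}
    (hφ : ∀ h₀, ⟪k h₀, h⟫_𝕜 = ⟪φ, T h₀⟫_𝕜) : ‖k.adjoint h‖ ≤ ‖T‖ * ‖φ‖ :=
  norm_le_opNorm_mul_of_inner_self_eq T <| by rw [k.adjoint_inner_right, hφ]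

theorem inv_sq_add_one_mul_sq_le {a b c : ℝ} (ha : 0 ≤ a) (hb : 0 ≤ b) (hc : 0 ≤ c)
    (h : a ≤ c * b) : ((c + 1) ^ 2)⁻¹ * a ^ 2 ≤ b ^ 2 := by
  rw [inv_mul_le_iff₀ (by positivity)]
  calc a ^ 2 ≤ (c * b) ^ 2 := by gcongr
    _ ≤ ((c + 1) * b) ^ 2 := by gcongr; linarith
    _ = (c + 1) ^ 2 * b ^ 2 := by ring

theorem ckFrame_of_analysis_factorization_general
    {H : Type*} [NormedAddCommGroup H] [InnerProductSpace ℂ H] [CompleteSpace H]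
    {H₀ : Type*} [NormedAddCommGroup H₀] [InnerProductSpace ℂ H₀] [CompleteSpace H₀]
    {X : Type*} [MeasurableSpace X] (μ : Measure X)
    (k : H₀ →L[ℂ] H) (f : X → H)
    (hmeas : ∀ h : H, Measurable fun x => (inner ℂ h (f x) : ℂ))
    (B : ℝ)
    (hBessel : ∀ h : H,
      ∫⁻ x, (‖(inner ℂ h (f x) : ℂ)‖₊ : ℝ≥0∞) ^ 2 ∂μ ≤ ENNReal.ofReal (B * ‖h‖ ^ 2))
    (M : H₀ →L[ℂ] Lp ℂ 2 μ)
    (hM : ∀ (h₀ : H₀) (h : H),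
      (inner ℂ (k h₀) h : ℂ) = ∫ x, (M h₀ : X → ℂ) x * (inner ℂ (f x) h : ℂ) ∂μ) :
    ∃ A : ℝ, 0 < A ∧ ∀ h : H,
      ENNReal.ofReal (A * ‖(ContinuousLinearMap.adjoint k) h‖ ^ 2) ≤
        ∫⁻ x, (‖(inner ℂ h (f x) : ℂ)‖₊ : ℝ≥0∞) ^ 2 ∂μ := by
  refine ⟨((‖M‖ + 1) ^ 2)⁻¹, by positivity, fun h => ?_⟩
  have hcoeff : MemLp (fun x => ⟪h, f x⟫_ℂ) 2 μ :=
    memLp_two_of_lintegral_sq_lt_top (hmeas h).aestronglyMeasurable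
      ((hBessel h).trans_lt ENNReal.ofReal_lt_top)
  have hfactor (h₀ : H₀) : ⟪k h₀, h⟫_ℂ = ⟪hcoeff.toLp _, M h₀⟫_ℂ := by
    rw [hM, L2.inner_toLp_left]
    congr 1 with x
    rw [RCLike.inner_apply, inner_conj_symm, mul_comm]
  have hbound := norm_adjoint_apply_le_of_inner_apply_eq k M hfactor
  simp only [← enorm_eq_nnnorm, ← hcoeff.ofReal_sq_norm_toLp]
  exact ENNReal.ofReal_le_ofReal <|
    inv_sq_add_one_mul_sq_le (norm_nonneg _) (norm_nonneg _) (norm_nonneg _) hbound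

/-- If `f : X → H` is a c-Bessel mapping (bound `B`) and there exists a
bounded operator `M : H₀ → L²(X,μ)` with `⟨k h₀, h⟩ = ∫ (M h₀)(x) ⟨f x, h⟩ dμ` for all
`h₀ ∈ H₀`, `h ∈ H`, then `f` is a ck-frame for `H` with respect to `H₀`: there is
`A > 0` with `A ‖k* h‖² ≤ ∫ |⟨h, f x⟩|² dμ` for all `h ∈ H`. -/
theorem ckFrame_of_analysis_factorization
    {H : Type*} [NormedAddCommGroup H] [InnerProductSpace ℂ H] [CompleteSpace H]
    {H₀ : Type*} [NormedAddCommGroup H₀] [InnerProductSpace ℂ H₀] [CompleteSpace H₀]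
    {X : Type*} [MeasurableSpace X] (μ : Measure X) [SigmaFinite μ]
    (k : H₀ →L[ℂ] H) (f : X → H)
    (hmeas : ∀ h : H, Measurable fun x => (inner ℂ h (f x) : ℂ))
    (B : ℝ)
    (hBessel : ∀ h : H,
      ∫⁻ x, (‖(inner ℂ h (f x) : ℂ)‖₊ : ℝ≥0∞) ^ 2 ∂μ ≤ ENNReal.ofReal (B * ‖h‖ ^ 2))
    (M : H₀ →L[ℂ] Lp ℂ 2 μ)
    (hM : ∀ (h₀ : H₀) (h : H),
      (inner ℂ (k h₀) h : ℂ) = ∫ x, (M h₀ : X → ℂ) x * (inner ℂ (f x) h : ℂ) ∂μ) :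
    ∃ A : ℝ, 0 < A ∧ ∀ h : H,
      ENNReal.ofReal (A * ‖(ContinuousLinearMap.adjoint k) h‖ ^ 2) ≤
        ∫⁻ x, (‖(inner ℂ h (f x) : ℂ)‖₊ : ℝ≥0∞) ^ 2 ∂μ :=
  ckFrame_of_analysis_factorization_general μ k f hmeas B hBessel M hM
end

section
/- Let H and H₀ be complex Hilbert spaces, (X,μ) a σ-finite measure space, k : H₀ → H a bounded linear operator with closed range, and f : X → H a ck-frame for H with respect to H₀ with bounds A, B. Then there exists a constant c > 0 such that for every h in the range of k, c‖h‖² ≤ ∫_X |⟨h, f(x)⟩|² dμ(x) ≤ B‖h‖². In particular, the restriction of the frame quadratic form to the range of k is bounded below and above, so the frame operator S_f is invertible on the range of k. -/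
/-!
Since `k` has closed range, the open mapping theorem applied to `k` corestricted to its range gives
every `h ∈ R(k)` a preimage `u` with `‖u‖ ≤ C ‖h‖`. Then
`‖h‖² = ⟪h, k u⟫ = ⟪k* h, u⟫ ≤ C ‖k* h‖ ‖h‖`, so `k*` is bounded below by `C⁻¹` on `R(k)`, and the
lower ck-frame bound becomes a lower frame bound `A C⁻²` on `R(k)`.
-/

open MeasureTheory
open scoped ENNReal

namespace ContinuousLinearMap

section Banach

variable {𝕜 E F : Type*} [NontriviallyNormedField 𝕜]
  [NormedAddCommGroup E] [NormedSpace 𝕜 E] [CompleteSpace E]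
  [NormedAddCommGroup F] [NormedSpace 𝕜 F] [CompleteSpace F]

theorem exists_preimage_norm_le_of_isClosed_range (T : E →L[𝕜] F)
    (hT : IsClosed (Set.range T)) :
    ∃ C > 0, ∀ y ∈ Set.range T, ∃ x, T x = y ∧ ‖x‖ ≤ C * ‖y‖ := by
  have : CompleteSpace (LinearMap.range (T : E →ₗ[𝕜] F)) := hT.completeSpace_coe
  obtain ⟨C, hC, hpre⟩ := T.rangeRestrict.exists_preimage_norm_le
    (T : E →ₗ[𝕜] F).surjective_rangeRestrict
  refine ⟨C, hC, ?_⟩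
  rintro _ ⟨u, rfl⟩
  obtain ⟨x, hx, hxC⟩ := hpre ⟨T u, u, rfl⟩
  exact ⟨x, congrArg Subtype.val hx, hxC⟩

end Banach

section Hilbert

variable {𝕜 E F : Type*} [RCLike 𝕜]
  [NormedAddCommGroup E] [InnerProductSpace 𝕜 E] [CompleteSpace E]
  [NormedAddCommGroup F] [InnerProductSpace 𝕜 F] [CompleteSpace F]

theorem exists_pos_mul_norm_le_norm_adjoint_of_isClosed_range (T : E →L[𝕜] F)
    (hT : IsClosed (Set.range T)) :
    ∃ c > 0, ∀ y ∈ Set.range T, c * ‖y‖ ≤ ‖adjoint T y‖ := by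
  obtain ⟨C, hC, hpre⟩ := T.exists_preimage_norm_le_of_isClosed_range hT
  refine ⟨C⁻¹, inv_pos.2 hC, fun y hy ↦ ?_⟩
  obtain ⟨x, rfl, hxC⟩ := hpre y hy
  have hsq : ‖T x‖ * ‖T x‖ ≤ C * ‖adjoint T (T x)‖ * ‖T x‖ :=
    calc ‖T x‖ * ‖T x‖ = RCLike.re (inner 𝕜 (adjoint T (T x)) x) := by
          rw [adjoint_inner_left, ← sq, ← inner_self_eq_norm_sq (𝕜 := 𝕜)]
      _ ≤ ‖adjoint T (T x)‖ * ‖x‖ := re_inner_le_norm _ _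
      _ ≤ ‖adjoint T (T x)‖ * (C * ‖T x‖) := by gcongr
      _ = C * ‖adjoint T (T x)‖ * ‖T x‖ := by ring
  rw [inv_mul_le_iff₀ hC]
  rcases (norm_nonneg (T x)).eq_or_lt with h0 | hpos
  · rw [← h0]
    positivity
  · exact le_of_mul_le_mul_right hsq hpos

end Hilbert

end ContinuousLinearMap

theorem frame_bounds_on_range_of_closed_range_general
    {H : Type*} [NormedAddCommGroup H] [InnerProductSpace ℂ H] [CompleteSpace H]
    {H₀ : Type*} [NormedAddCommGroup H₀] [InnerProductSpace ℂ H₀] [CompleteSpace H₀]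
    {X : Type*} [MeasurableSpace X] (μ : Measure X)
    (k : H₀ →L[ℂ] H) (hclosed : IsClosed (Set.range k))
    (f : X → H)
    (A B : ℝ) (hA : 0 < A)
    (hlow : ∀ h : H,
      ENNReal.ofReal (A * ‖(ContinuousLinearMap.adjoint k) h‖ ^ 2) ≤
        ∫⁻ x, (‖(inner ℂ h (f x) : ℂ)‖₊ : ℝ≥0∞) ^ 2 ∂μ)
    (hup : ∀ h : H,
      ∫⁻ x, (‖(inner ℂ h (f x) : ℂ)‖₊ : ℝ≥0∞) ^ 2 ∂μ ≤ ENNReal.ofReal (B * ‖h‖ ^ 2)) :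
    ∃ c : ℝ, 0 < c ∧ ∀ h ∈ Set.range k,
      ENNReal.ofReal (c * ‖h‖ ^ 2) ≤ ∫⁻ x, (‖(inner ℂ h (f x) : ℂ)‖₊ : ℝ≥0∞) ^ 2 ∂μ ∧
      ∫⁻ x, (‖(inner ℂ h (f x) : ℂ)‖₊ : ℝ≥0∞) ^ 2 ∂μ ≤ ENNReal.ofReal (B * ‖h‖ ^ 2) := by
  obtain ⟨c, hc, hkc⟩ := k.exists_pos_mul_norm_le_norm_adjoint_of_isClosed_range hclosed
  refine ⟨A * c ^ 2, by positivity, fun h hh ↦ ⟨le_trans ?_ (hlow h), hup h⟩⟩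
  apply ENNReal.ofReal_le_ofReal
  calc A * c ^ 2 * ‖h‖ ^ 2 = A * (c * ‖h‖) ^ 2 := by ring
    _ ≤ A * ‖(ContinuousLinearMap.adjoint k) h‖ ^ 2 := by
        gcongr
        exact hkc h hh

/-- If `k : H₀ → H` has closed range and `f : X → H` is a ck-frame for `H`
with respect to `H₀` with bounds `A, B`, then there is `c > 0` such that
`c ‖h‖² ≤ ∫ |⟨h, f x⟩|² dμ ≤ B ‖h‖²` for every `h ∈ R(k)`. -/
theorem frame_bounds_on_range_of_closed_range
    {H : Type*} [NormedAddCommGroup H] [InnerProductSpace ℂ H] [CompleteSpace H]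
    {H₀ : Type*} [NormedAddCommGroup H₀] [InnerProductSpace ℂ H₀] [CompleteSpace H₀]
    {X : Type*} [MeasurableSpace X] (μ : Measure X) [SigmaFinite μ]
    (k : H₀ →L[ℂ] H) (hclosed : IsClosed (Set.range k))
    (f : X → H)
    (hmeas : ∀ h : H, Measurable fun x => (inner ℂ h (f x) : ℂ))
    (A B : ℝ) (hA : 0 < A) (hB : 0 < B)
    (hlow : ∀ h : H,
      ENNReal.ofReal (A * ‖(ContinuousLinearMap.adjoint k) h‖ ^ 2) ≤
        ∫⁻ x, (‖(inner ℂ h (f x) : ℂ)‖₊ : ℝ≥0∞) ^ 2 ∂μ)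
    (hup : ∀ h : H,
      ∫⁻ x, (‖(inner ℂ h (f x) : ℂ)‖₊ : ℝ≥0∞) ^ 2 ∂μ ≤ ENNReal.ofReal (B * ‖h‖ ^ 2)) :
    ∃ c : ℝ, 0 < c ∧ ∀ h ∈ Set.range k,
      ENNReal.ofReal (c * ‖h‖ ^ 2) ≤ ∫⁻ x, (‖(inner ℂ h (f x) : ℂ)‖₊ : ℝ≥0∞) ^ 2 ∂μ ∧
      ∫⁻ x, (‖(inner ℂ h (f x) : ℂ)‖₊ : ℝ≥0∞) ^ 2 ∂μ ≤ ENNReal.ofReal (B * ‖h‖ ^ 2) :=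
  frame_bounds_on_range_of_closed_range_general μ k hclosed f A B hA hlow hup
end

section
/- Let H and H₀ be complex Hilbert spaces, (X,μ) a σ-finite measure space, k : H₀ → H a bounded linear operator, f : X → H a c-Bessel mapping for H, and g : X → H₀ a c-Bessel mapping for H₀. Let {e_i}_{i∈I} be an orthonormal basis of H and {γ_j}_{j∈J} an orthonormal basis of H₀. If ⟨k*(e_i), γ_j⟩ = ∫_X ⟨e_i, f(x)⟩ ⟨g(x), γ_j⟩ dμ(x) for all i ∈ I and j ∈ J, then ⟨k*(h), h₀⟩ = ∫_X ⟨h, f(x)⟩ ⟨g(x), h₀⟩ dμ(x) for all h ∈ H and h₀ ∈ H₀. -/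
open MeasureTheory
open scoped ENNReal NNReal InnerProductSpace

/-!
A Bessel map `f : X → H` makes `h ↦ (x ↦ ⟪f x, h⟫)` a bounded operator `Φ : H → L²(μ)`, and
likewise `g` gives `Ψ : H₀ → L²(μ)`. The integral `∫ ⟪h, f x⟫ ⟪g x, h₀⟫ dμ` is the `L²` inner
product `⟪Φ h, Ψ h₀⟫ = ⟪Ψ† Φ h, h₀⟫`, so the hypothesis says that the bounded operators `k†` and
`Ψ† Φ` have the same matrix entries with respect to the two Hilbert bases, hence coincide.
-/

theorem HilbertBasis.ext_inner_right {ι 𝕜 E : Type*} [RCLike 𝕜] [NormedAddCommGroup E]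
    [InnerProductSpace 𝕜 E] (b : HilbertBasis ι 𝕜 E) {x y : E}
    (h : ∀ i, ⟪x, b i⟫_𝕜 = ⟪y, b i⟫_𝕜) : x = y :=
  b.repr.injective <| lp.ext <| funext fun i => by
    simp only [b.repr_apply_apply, ← inner_conj_symm (b i), h]

theorem ContinuousLinearMap.ext_hilbertBasis {ι κ 𝕜 E F : Type*} [RCLike 𝕜]
    [NormedAddCommGroup E] [InnerProductSpace 𝕜 E] [NormedAddCommGroup F] [InnerProductSpace 𝕜 F]
    (b : HilbertBasis ι 𝕜 E) (c : HilbertBasis κ 𝕜 F) {A A' : E →L[𝕜] F}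
    (h : ∀ i j, ⟪A (b i), c j⟫_𝕜 = ⟪A' (b i), c j⟫_𝕜) : A = A' :=
  ext_on (Submodule.dense_iff_topologicalClosure_eq_top.mpr b.dense_span) <| by
    rintro _ ⟨i, rfl⟩
    exact c.ext_inner_right (h i)

theorem LinearMap.exists_clm_Lp_of_eLpNorm_le {𝕜 E F X : Type*} [NormedField 𝕜]
    [SeminormedAddCommGroup E] [NormedSpace 𝕜 E] [NormedAddCommGroup F] [NormedSpace 𝕜 F] [MeasurableSpace X]
    {μ : Measure X} {p : ℝ≥0∞} [Fact (1 ≤ p)] (L : E →ₗ[𝕜] X → F)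
    (hL : ∀ v, MemLp (L v) p μ) (C : ℝ≥0) (hC : ∀ v, eLpNorm (L v) p μ ≤ C * ‖v‖ₑ) :
    ∃ T : E →L[𝕜] Lp F p μ, ∀ v, T v =ᵐ[μ] L v := by
  let T₀ : E →ₗ[𝕜] Lp F p μ :=
    { toFun := fun v => (hL v).toLp
      map_add' := fun v w => by
        rw [← MemLp.toLp_add]
        exact MemLp.toLp_congr _ _ (.of_eq (map_add L v w))
      map_smul' := fun c v => by
        rw [RingHom.id_apply, ← MemLp.toLp_const_smul]
        exact MemLp.toLp_congr _ _ (.of_eq (map_smul L c v)) }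
  refine ⟨T₀.mkContinuous C fun v => ?_, fun v => (hL v).coeFn_toLp⟩
  calc ‖(hL v).toLp‖ = (eLpNorm (L v) p μ).toReal := Lp.norm_toLp _ _
    _ ≤ (C * ‖v‖ₑ).toReal := ENNReal.toReal_mono (by simp [ENNReal.mul_eq_top]) (hC v)
    _ = C * ‖v‖ := by simp

theorem eLpNorm_two_le_of_lintegral_sq_le {X F : Type*} [MeasurableSpace X] {μ : Measure X}
    [NormedAddCommGroup F] {φ : X → F} {a : ℝ} (h : ∫⁻ x, ‖φ x‖ₑ ^ 2 ∂μ ≤ ENNReal.ofReal a) :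
    eLpNorm φ 2 μ ≤ ENNReal.ofReal √a := by
  have hsq : eLpNorm φ 2 μ ^ 2 = ∫⁻ x, ‖φ x‖ₑ ^ 2 ∂μ := by
    simpa using eLpNorm_nnreal_pow_eq_lintegral (f := φ) (μ := μ) (p := 2) two_ne_zero
  rw [← ENNReal.pow_le_pow_left_iff two_ne_zero, ← ENNReal.ofReal_pow (Real.sqrt_nonneg a),
    Real.sq_sqrt', hsq]
  simpa using h

theorem exists_clm_L2_inner_of_bessel {𝕜 E X : Type*} [RCLike 𝕜] [NormedAddCommGroup E]
    [InnerProductSpace 𝕜 E] [MeasurableSpace X] {μ : Measure X} (f : X → E)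
    (hmeas : ∀ v, AEStronglyMeasurable (fun x => ⟪v, f x⟫_𝕜) μ) (B : ℝ)
    (hB : ∀ v, ∫⁻ x, ‖⟪v, f x⟫_𝕜‖ₑ ^ 2 ∂μ ≤ ENNReal.ofReal (B * ‖v‖ ^ 2)) :
    ∃ T : E →L[𝕜] Lp 𝕜 2 μ, ∀ v, T v =ᵐ[μ] fun x => ⟪f x, v⟫_𝕜 := by
  have hconj : ∀ v, (fun x => ⟪f x, v⟫_𝕜) = star fun x => ⟪v, f x⟫_𝕜 := fun v =>
    funext fun x => (inner_conj_symm _ _).symm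
  have hbound : ∀ v, eLpNorm (fun x => ⟪f x, v⟫_𝕜) 2 μ ≤ (√B).toNNReal * ‖v‖ₑ := fun v =>
    calc eLpNorm (fun x => ⟪f x, v⟫_𝕜) 2 μ = eLpNorm (fun x => ⟪v, f x⟫_𝕜) 2 μ := by
          rw [hconj, eLpNorm_star]
      _ ≤ ENNReal.ofReal √(B * ‖v‖ ^ 2) := eLpNorm_two_le_of_lintegral_sq_le (hB v)
      _ = (√B).toNNReal * ‖v‖ₑ := by
          rw [Real.sqrt_mul' B (sq_nonneg _), Real.sqrt_sq (norm_nonneg v),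
            ENNReal.ofReal_mul (Real.sqrt_nonneg B), ofReal_norm]
          rfl
  have hmem : ∀ v, MemLp (fun x => ⟪f x, v⟫_𝕜) 2 μ := fun v =>
    ⟨hconj v ▸ (hmeas v).star, (hbound v).trans_lt (by finiteness)⟩
  exact (LinearMap.pi fun x => innerₛₗ 𝕜 (f x)).exists_clm_Lp_of_eLpNorm_le hmem _ hbound

theorem ck_dual_of_orthonormal_basis_general
    {H : Type*} [NormedAddCommGroup H] [InnerProductSpace ℂ H] [CompleteSpace H]
    {H₀ : Type*} [NormedAddCommGroup H₀] [InnerProductSpace ℂ H₀] [CompleteSpace H₀]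
    {X : Type*} [MeasurableSpace X] (μ : Measure X)
    (k : H₀ →L[ℂ] H) (f : X → H) (g : X → H₀)
    (hfmeas : ∀ h : H, Measurable fun x => (inner ℂ h (f x) : ℂ))
    (hgmeas : ∀ h₀ : H₀, Measurable fun x => (inner ℂ h₀ (g x) : ℂ))
    (B : ℝ)
    (hfBessel : ∀ h : H,
      ∫⁻ x, (‖(inner ℂ h (f x) : ℂ)‖₊ : ℝ≥0∞) ^ 2 ∂μ ≤ ENNReal.ofReal (B * ‖h‖ ^ 2))
    (B' : ℝ)
    (hgBessel : ∀ h₀ : H₀,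
      ∫⁻ x, (‖(inner ℂ h₀ (g x) : ℂ)‖₊ : ℝ≥0∞) ^ 2 ∂μ ≤ ENNReal.ofReal (B' * ‖h₀‖ ^ 2))
    {I J : Type*} (e : HilbertBasis I ℂ H) (γ : HilbertBasis J ℂ H₀)
    (hbasis : ∀ (i : I) (j : J),
      (inner ℂ ((ContinuousLinearMap.adjoint k) (e i)) (γ j) : ℂ) =
        ∫ x, (inner ℂ (e i) (f x) : ℂ) * (inner ℂ (g x) (γ j) : ℂ) ∂μ) :
    ∀ (h : H) (h₀ : H₀),
      (inner ℂ ((ContinuousLinearMap.adjoint k) h) h₀ : ℂ) =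
        ∫ x, (inner ℂ h (f x) : ℂ) * (inner ℂ (g x) h₀ : ℂ) ∂μ := by
  obtain ⟨Φ, hΦ⟩ := exists_clm_L2_inner_of_bessel f (fun h => (hfmeas h).aestronglyMeasurable)
    B hfBessel
  obtain ⟨Ψ, hΨ⟩ := exists_clm_L2_inner_of_bessel g (fun h₀ => (hgmeas h₀).aestronglyMeasurable)
    B' hgBessel
  have hform : ∀ h h₀, ∫ x, ⟪h, f x⟫_ℂ * ⟪g x, h₀⟫_ℂ ∂μ =
      ⟪(ContinuousLinearMap.adjoint Ψ ∘L Φ) h, h₀⟫_ℂ := fun h h₀ => by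
    rw [ContinuousLinearMap.comp_apply, ContinuousLinearMap.adjoint_inner_left, L2.inner_def]
    refine integral_congr_ae ?_
    filter_upwards [hΦ h, hΨ h₀] with x hΦx hΨx
    rw [hΦx, hΨx, RCLike.inner_apply', inner_conj_symm]
  have hk : ContinuousLinearMap.adjoint k = ContinuousLinearMap.adjoint Ψ ∘L Φ :=
    ContinuousLinearMap.ext_hilbertBasis e γ fun i j => by rw [hbasis, hform]
  intro h h₀
  rw [hform, hk]

/-- For c-Bessel mappings `f : X → H`, `g : X → H₀`, a bounded operator
`k : H₀ → H`, and Hilbert (orthonormal) bases `{e_i}` of `H` and `{γ_j}` of `H₀`: if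
`⟨k* e_i, γ_j⟩ = ∫ ⟨e_i, f x⟩ ⟨g x, γ_j⟩ dμ` for all `i, j`, then
`⟨k* h, h₀⟩ = ∫ ⟨h, f x⟩ ⟨g x, h₀⟩ dμ` for all `h ∈ H`, `h₀ ∈ H₀`. -/
theorem ck_dual_of_orthonormal_basis
    {H : Type*} [NormedAddCommGroup H] [InnerProductSpace ℂ H] [CompleteSpace H]
    {H₀ : Type*} [NormedAddCommGroup H₀] [InnerProductSpace ℂ H₀] [CompleteSpace H₀]
    {X : Type*} [MeasurableSpace X] (μ : Measure X) [SigmaFinite μ]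
    (k : H₀ →L[ℂ] H) (f : X → H) (g : X → H₀)
    (hfmeas : ∀ h : H, Measurable fun x => (inner ℂ h (f x) : ℂ))
    (hgmeas : ∀ h₀ : H₀, Measurable fun x => (inner ℂ h₀ (g x) : ℂ))
    (B : ℝ)
    (hfBessel : ∀ h : H,
      ∫⁻ x, (‖(inner ℂ h (f x) : ℂ)‖₊ : ℝ≥0∞) ^ 2 ∂μ ≤ ENNReal.ofReal (B * ‖h‖ ^ 2))
    (B' : ℝ)
    (hgBessel : ∀ h₀ : H₀,
      ∫⁻ x, (‖(inner ℂ h₀ (g x) : ℂ)‖₊ : ℝ≥0∞) ^ 2 ∂μ ≤ ENNReal.ofReal (B' * ‖h₀‖ ^ 2))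
    {I J : Type*} (e : HilbertBasis I ℂ H) (γ : HilbertBasis J ℂ H₀)
    (hbasis : ∀ (i : I) (j : J),
      (inner ℂ ((ContinuousLinearMap.adjoint k) (e i)) (γ j) : ℂ) =
        ∫ x, (inner ℂ (e i) (f x) : ℂ) * (inner ℂ (g x) (γ j) : ℂ) ∂μ) :
    ∀ (h : H) (h₀ : H₀),
      (inner ℂ ((ContinuousLinearMap.adjoint k) h) h₀ : ℂ) =
        ∫ x, (inner ℂ h (f x) : ℂ) * (inner ℂ (g x) h₀ : ℂ) ∂μ :=
  ck_dual_of_orthonormal_basis_general μ k f g hfmeas hgmeas B hfBessel B' hgBessel e γ hbasis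
end

section
/- Let H and H₀ be complex Hilbert spaces, (X,μ) a σ-finite measure space, k : H₀ → H a surjective bounded linear operator, f : X → H a c-Bessel mapping for H, and g : X → H₀ a c-Bessel mapping for H₀. If ‖k h₀‖² = ∫_X ⟨h₀, g(x)⟩ ⟨f(x), k h₀⟩ dμ(x) for every h₀ ∈ H₀, then ⟨k*(h), h₀⟩ = ∫_X ⟨h, f(x)⟩ ⟨g(x), h₀⟩ dμ(x) for all h ∈ H and h₀ ∈ H₀ (and conversely). -/
open MeasureTheory
open scoped ENNReal
open scoped InnerProductSpace ComplexConjugate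

/-!
The integral `S h h₀ = ∫ ⟨h, f x⟩ ⟨g x, h₀⟩ dμ` converges by Cauchy–Schwarz in `L²`, thanks to the
Bessel bounds, and defines a sesquilinear form on `H × H₀`. Up to complex conjugation, the norm
identity says that the sesquilinear forms `(u, v) ↦ S (k u) v` and `(u, v) ↦ ⟨k* k u, v⟩` on `H₀`
agree on the diagonal, so they agree everywhere by complex polarization. Since `k` is surjective,
this is `⟨k* h, h₀⟩ = S h h₀` for all `h ∈ H`.
-/

theorem memLp_two_of_lintegral_enorm_sq_lt_top {X E : Type*} [MeasurableSpace X] {μ : Measure X}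
    [NormedAddCommGroup E] {a : X → E} (ha : AEStronglyMeasurable a μ)
    (h : ∫⁻ x, ‖a x‖ₑ ^ 2 ∂μ < ∞) : MemLp a 2 μ :=
  ⟨ha, (eLpNorm_lt_top_iff_lintegral_rpow_enorm_lt_top two_ne_zero ENNReal.ofNat_ne_top).2
    (by simpa using h)⟩

theorem LinearMap.eq_of_apply_self_eq {V : Type*} [AddCommGroup V] [Module ℂ V]
    {B C : V →ₗ⋆[ℂ] V →ₗ[ℂ] ℂ} (h : ∀ x, B x x = C x x) : B = C := by
  rw [← sub_eq_zero]
  set D := B - C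
  have hD : ∀ x, D x x = 0 := fun x => by simp [D, h]
  ext x y
  have hsum : D x y + D y x = 0 := by simpa [hD] using hD (x + y)
  have hdiff : D x y - D y x = 0 := by
    have := hD (x + Complex.I • y)
    simp only [map_add, LinearMap.map_smulₛₗ, Complex.conj_I, neg_smul, add_apply, hD, map_smul,
      smul_eq_mul, zero_add, neg_apply, smul_apply, mul_zero] at this
    linear_combination (-Complex.I) * this + (D x y - D y x) * Complex.I_sq
  rw [LinearMap.zero_apply, LinearMap.zero_apply]
  linear_combination (hsum + hdiff) / 2

section CrossFrameForm

variable {X H H₀ : Type*} [MeasurableSpace X] {μ : Measure X}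
  [NormedAddCommGroup H] [InnerProductSpace ℂ H] [NormedAddCommGroup H₀] [InnerProductSpace ℂ H₀]

theorem integrable_inner_mul_inner {f : X → H} {g : X → H₀}
    (hf : ∀ h, MemLp (fun x => ⟪h, f x⟫_ℂ) 2 μ) (hg : ∀ h₀, MemLp (fun x => ⟪h₀, g x⟫_ℂ) 2 μ)
    (h : H) (h₀ : H₀) : Integrable (fun x => ⟪h, f x⟫_ℂ * ⟪g x, h₀⟫_ℂ) μ := by
  simpa only [Pi.mul_def, Pi.star_def, RCLike.star_def, inner_conj_symm] using
    (hf h).integrable_mul (hg h₀).star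

variable (μ) in
noncomputable def crossFrameForm (f : X → H) (g : X → H₀)
    (hint : ∀ h h₀, Integrable (fun x => ⟪h, f x⟫_ℂ * ⟪g x, h₀⟫_ℂ) μ) :
    H →ₗ⋆[ℂ] H₀ →ₗ[ℂ] ℂ :=
  LinearMap.mk₂'ₛₗ _ _ (fun h h₀ => ∫ x, ⟪h, f x⟫_ℂ * ⟪g x, h₀⟫_ℂ ∂μ)
    (fun h h' h₀ => by
      simp only [inner_add_left, add_mul]; exact integral_add (hint _ _) (hint _ _))
    (fun c h h₀ => by simp only [inner_smul_left, mul_assoc]; exact integral_const_mul _ _)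
    (fun h h₀ h₀' => by
      simp only [inner_add_right, mul_add]; exact integral_add (hint _ _) (hint _ _))
    (fun c h h₀ => by simp only [inner_smul_right, mul_left_comm _ c]; exact integral_const_mul _ _)

theorem crossFrameForm_apply {f : X → H} {g : X → H₀} {hint} (h : H) (h₀ : H₀) :
    crossFrameForm μ f g hint h h₀ = ∫ x, ⟪h, f x⟫_ℂ * ⟪g x, h₀⟫_ℂ ∂μ := rfl

theorem conj_crossFrameForm_apply {f : X → H} {g : X → H₀} {hint} (h : H) (h₀ : H₀) :
    conj (crossFrameForm μ f g hint h h₀) = ∫ x, ⟪h₀, g x⟫_ℂ * ⟪f x, h⟫_ℂ ∂μ := by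
  simp only [crossFrameForm_apply, ← integral_conj, map_mul, inner_conj_symm, mul_comm]

end CrossFrameForm

theorem inner_adjoint_eq_sesqForm_iff_of_surjective {H H₀ : Type*}
    [NormedAddCommGroup H] [InnerProductSpace ℂ H] [CompleteSpace H]
    [NormedAddCommGroup H₀] [InnerProductSpace ℂ H₀] [CompleteSpace H₀]
    {k : H₀ →L[ℂ] H} (hk : Function.Surjective k) (S : H →ₗ⋆[ℂ] H₀ →ₗ[ℂ] ℂ) :
    (∀ h h₀, ⟪k.adjoint h, h₀⟫_ℂ = S h h₀) ↔ ∀ h₀, S (k h₀) h₀ = ⟪k h₀, k h₀⟫_ℂ := by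
  refine ⟨fun hS h₀ => by rw [← hS, k.adjoint_inner_left], fun hdiag h h₀ => ?_⟩
  obtain ⟨u, rfl⟩ := hk h
  have hform : S.comp k.toLinearMap = (innerₛₗ ℂ).comp (k.adjoint ∘L k).toLinearMap :=
    LinearMap.eq_of_apply_self_eq fun v => by simp [hdiag, k.adjoint_inner_left]
  exact (LinearMap.congr_fun₂ hform u h₀).symm

theorem ck_dual_iff_norm_identity_of_surjective_general
    {H : Type*} [NormedAddCommGroup H] [InnerProductSpace ℂ H] [CompleteSpace H]
    {H₀ : Type*} [NormedAddCommGroup H₀] [InnerProductSpace ℂ H₀] [CompleteSpace H₀]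
    {X : Type*} [MeasurableSpace X] (μ : Measure X)
    (k : H₀ →L[ℂ] H) (hk : Function.Surjective k)
    (f : X → H) (g : X → H₀)
    (hfmeas : ∀ h : H, Measurable fun x => (inner ℂ h (f x) : ℂ))
    (hgmeas : ∀ h₀ : H₀, Measurable fun x => (inner ℂ h₀ (g x) : ℂ))
    (B : ℝ)
    (hfBessel : ∀ h : H,
      ∫⁻ x, (‖(inner ℂ h (f x) : ℂ)‖₊ : ℝ≥0∞) ^ 2 ∂μ ≤ ENNReal.ofReal (B * ‖h‖ ^ 2))
    (B' : ℝ)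
    (hgBessel : ∀ h₀ : H₀,
      ∫⁻ x, (‖(inner ℂ h₀ (g x) : ℂ)‖₊ : ℝ≥0∞) ^ 2 ∂μ ≤ ENNReal.ofReal (B' * ‖h₀‖ ^ 2)) :
    (∀ h₀ : H₀, ((‖k h₀‖ ^ 2 : ℝ) : ℂ) =
        ∫ x, (inner ℂ h₀ (g x) : ℂ) * (inner ℂ (f x) (k h₀) : ℂ) ∂μ) ↔
      (∀ (h : H) (h₀ : H₀),
        (inner ℂ ((ContinuousLinearMap.adjoint k) h) h₀ : ℂ) =
          ∫ x, (inner ℂ h (f x) : ℂ) * (inner ℂ (g x) h₀ : ℂ) ∂μ) := by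
  have hf (h : H) : MemLp (fun x => ⟪h, f x⟫_ℂ) 2 μ :=
    memLp_two_of_lintegral_enorm_sq_lt_top (hfmeas h).aestronglyMeasurable
      ((hfBessel h).trans_lt ENNReal.ofReal_lt_top)
  have hg (h₀ : H₀) : MemLp (fun x => ⟪h₀, g x⟫_ℂ) 2 μ :=
    memLp_two_of_lintegral_enorm_sq_lt_top (hgmeas h₀).aestronglyMeasurable
      ((hgBessel h₀).trans_lt ENNReal.ofReal_lt_top)
  set S := crossFrameForm μ f g (integrable_inner_mul_inner hf hg)
  have hnorm (h₀ : H₀) : ((‖k h₀‖ ^ 2 : ℝ) : ℂ) =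
      ∫ x, ⟪h₀, g x⟫_ℂ * ⟪f x, k h₀⟫_ℂ ∂μ ↔ S (k h₀) h₀ = ⟪k h₀, k h₀⟫_ℂ := by
    have hsq : ((‖k h₀‖ ^ 2 : ℝ) : ℂ) = conj ⟪k h₀, k h₀⟫_ℂ := by
      rw [inner_self_conj, inner_self_eq_norm_sq_to_K]; norm_cast
    rw [hsq, ← conj_crossFrameForm_apply (hint := integrable_inner_mul_inner hf hg),
      (starRingEnd ℂ).injective.eq_iff, eq_comm]
  simp_rw [hnorm]
  exact (inner_adjoint_eq_sesqForm_iff_of_surjective hk S).symm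

/-- For a surjective bounded operator `k : H₀ → H` and c-Bessel mappings
`f : X → H`, `g : X → H₀`: `‖k h₀‖² = ∫ ⟨h₀, g x⟩ ⟨f x, k h₀⟩ dμ` holds for every
`h₀ ∈ H₀` if and only if `⟨k* h, h₀⟩ = ∫ ⟨h, f x⟩ ⟨g x, h₀⟩ dμ` for all `h ∈ H`,
`h₀ ∈ H₀`. -/
theorem ck_dual_iff_norm_identity_of_surjective
    {H : Type*} [NormedAddCommGroup H] [InnerProductSpace ℂ H] [CompleteSpace H]
    {H₀ : Type*} [NormedAddCommGroup H₀] [InnerProductSpace ℂ H₀] [CompleteSpace H₀]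
    {X : Type*} [MeasurableSpace X] (μ : Measure X) [SigmaFinite μ]
    (k : H₀ →L[ℂ] H) (hk : Function.Surjective k)
    (f : X → H) (g : X → H₀)
    (hfmeas : ∀ h : H, Measurable fun x => (inner ℂ h (f x) : ℂ))
    (hgmeas : ∀ h₀ : H₀, Measurable fun x => (inner ℂ h₀ (g x) : ℂ))
    (B : ℝ)
    (hfBessel : ∀ h : H,
      ∫⁻ x, (‖(inner ℂ h (f x) : ℂ)‖₊ : ℝ≥0∞) ^ 2 ∂μ ≤ ENNReal.ofReal (B * ‖h‖ ^ 2))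
    (B' : ℝ)
    (hgBessel : ∀ h₀ : H₀,
      ∫⁻ x, (‖(inner ℂ h₀ (g x) : ℂ)‖₊ : ℝ≥0∞) ^ 2 ∂μ ≤ ENNReal.ofReal (B' * ‖h₀‖ ^ 2)) :
    (∀ h₀ : H₀, ((‖k h₀‖ ^ 2 : ℝ) : ℂ) =
        ∫ x, (inner ℂ h₀ (g x) : ℂ) * (inner ℂ (f x) (k h₀) : ℂ) ∂μ) ↔
      (∀ (h : H) (h₀ : H₀),
        (inner ℂ ((ContinuousLinearMap.adjoint k) h) h₀ : ℂ) =
          ∫ x, (inner ℂ h (f x) : ℂ) * (inner ℂ (g x) h₀ : ℂ) ∂μ) :=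
  ck_dual_iff_norm_identity_of_surjective_general μ k hk f g hfmeas hgmeas B hfBessel B' hgBessel
end

section
/- Let H and H₀ be complex Hilbert spaces, (X,μ) a σ-finite measure space, k : H₀ → H a bounded linear operator, f : X → H a c-Bessel mapping for H with bound B, and g : X → H₀ a c-Bessel mapping for H₀ with bound B'. Suppose f, g form a ck-dual pair: ⟨k h₀, h⟩ = ∫_X ⟨h₀, g(x)⟩ ⟨f(x), h⟩ dμ(x) for all h₀ ∈ H₀ and h ∈ H. Then g is a ck*-frame for H₀ with respect to H with lower bound B⁻¹, i.e., B⁻¹‖k h₀‖² ≤ ∫_X |⟨h₀, g(x)⟩|² dμ(x) for all h₀ ∈ H₀; and f is a ck-frame for H with respect to H₀ with lower bound (B')⁻¹, i.e., (B')⁻¹‖k*(h)‖² ≤ ∫_X |⟨h, f(x)⟩|² dμ(x) for all h ∈ H. -/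
open MeasureTheory
open scoped ENNReal

/-!
Put `h = k h₀` in the dual-pair identity: Cauchy–Schwarz in `L²(μ)` and the Bessel bound of `f`
give `‖k h₀‖⁴ ≤ (∫ |⟪h₀, g x⟫|² dμ) · B ‖k h₀‖²`. Taking adjoints, `(g, f)` is a `k*`-dual pair,
so the same argument with the Bessel bound of `g` gives the second inequality.
-/

section CauchySchwarz

variable {α : Type*} [MeasurableSpace α] {μ : Measure α}

theorem ENNReal.lintegral_mul_sq_le {f g : α → ℝ≥0∞} (hf : AEMeasurable f μ)
    (hg : AEMeasurable g μ) :
    (∫⁻ a, f a * g a ∂μ) ^ 2 ≤ (∫⁻ a, f a ^ 2 ∂μ) * ∫⁻ a, g a ^ 2 ∂μ := by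
  have holder := ENNReal.lintegral_mul_le_Lp_mul_Lq μ Real.HolderConjugate.two_two hf hg
  simp only [Pi.mul_apply, ENNReal.rpow_two] at holder
  calc (∫⁻ a, f a * g a ∂μ) ^ 2
      ≤ ((∫⁻ a, f a ^ 2 ∂μ) ^ (1 / 2 : ℝ) * (∫⁻ a, g a ^ 2 ∂μ) ^ (1 / 2 : ℝ)) ^ 2 := by
        gcongr
    _ = (∫⁻ a, f a ^ 2 ∂μ) * ∫⁻ a, g a ^ 2 ∂μ := by
        rw [mul_pow, ← ENNReal.rpow_natCast, ← ENNReal.rpow_natCast, ← ENNReal.rpow_mul,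
          ← ENNReal.rpow_mul]
        norm_num

variable {𝕜 : Type*} [RCLike 𝕜]

theorem enorm_integral_mul_sq_le {p q : α → 𝕜} (hp : AEMeasurable p μ) (hq : AEMeasurable q μ) :
    ‖∫ a, p a * q a ∂μ‖ₑ ^ 2 ≤ (∫⁻ a, ‖p a‖ₑ ^ 2 ∂μ) * ∫⁻ a, ‖q a‖ₑ ^ 2 ∂μ :=
  calc ‖∫ a, p a * q a ∂μ‖ₑ ^ 2 ≤ (∫⁻ a, ‖p a‖ₑ * ‖q a‖ₑ ∂μ) ^ 2 := by
        gcongr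
        simpa only [enorm_mul] using enorm_integral_le_lintegral_enorm (fun a => p a * q a)
    _ ≤ _ := ENNReal.lintegral_mul_sq_le hp.enorm hq.enorm

theorem ofReal_inv_mul_le_lintegral_enorm_sq {p q : α → 𝕜} (hp : AEMeasurable p μ)
    (hq : AEMeasurable q μ) {C a : ℝ} (hq_le : ∫⁻ x, ‖q x‖ₑ ^ 2 ∂μ ≤ ENNReal.ofReal (C * a))
    (hpq : ‖∫ x, p x * q x ∂μ‖ = a) :
    ENNReal.ofReal (C⁻¹ * a) ≤ ∫⁻ x, ‖p x‖ₑ ^ 2 ∂μ := by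
  rcases le_or_gt C 0 with hC | hC
  · rw [ENNReal.ofReal_of_nonpos (mul_nonpos_of_nonpos_of_nonneg (inv_nonpos.2 hC)
      (hpq ▸ norm_nonneg _))]
    exact zero_le
  have hpq_enorm : ‖∫ x, p x * q x ∂μ‖ₑ = ENNReal.ofReal a := by rw [← ofReal_norm, hpq]
  have hsq : ENNReal.ofReal a * ENNReal.ofReal a ≤
      (∫⁻ x, ‖p x‖ₑ ^ 2 ∂μ) * ENNReal.ofReal C * ENNReal.ofReal a :=
    calc ENNReal.ofReal a * ENNReal.ofReal a = ‖∫ x, p x * q x ∂μ‖ₑ ^ 2 := by rw [hpq_enorm, sq]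
      _ ≤ (∫⁻ x, ‖p x‖ₑ ^ 2 ∂μ) * ENNReal.ofReal (C * a) := by
        grw [enorm_integral_mul_sq_le hp hq, hq_le]
      _ = _ := by rw [ENNReal.ofReal_mul hC.le, mul_assoc]
  have hle : ENNReal.ofReal a ≤ (∫⁻ x, ‖p x‖ₑ ^ 2 ∂μ) * ENNReal.ofReal C := by
    rcases eq_or_ne (ENNReal.ofReal a) 0 with ha | ha
    · simp [ha]
    · exact (ENNReal.mul_le_mul_iff_left ha ENNReal.ofReal_ne_top).1 hsq
  rw [ENNReal.ofReal_mul (inv_nonneg.2 hC.le), ENNReal.ofReal_inv_of_pos hC, mul_comm,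
    ← div_eq_mul_inv]
  exact ENNReal.div_le_of_le_mul hle

end CauchySchwarz

section DualPair

variable {H H₀ X : Type*} [NormedAddCommGroup H] [InnerProductSpace ℂ H]
  [NormedAddCommGroup H₀] [InnerProductSpace ℂ H₀] [MeasurableSpace X] {μ : Measure X}

def IsKDualPair (μ : Measure X) (k : H₀ →L[ℂ] H) (f : X → H) (g : X → H₀) : Prop :=
  ∀ h₀ h, inner ℂ (k h₀) h = ∫ x, inner ℂ h₀ (g x) * inner ℂ (f x) h ∂μ

theorem IsKDualPair.adjoint [CompleteSpace H] [CompleteSpace H₀] {k : H₀ →L[ℂ] H} {f : X → H}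
    {g : X → H₀} (hkfg : IsKDualPair μ k f g) :
    IsKDualPair μ (ContinuousLinearMap.adjoint k) g f := by
  intro h h₀
  rw [ContinuousLinearMap.adjoint_inner_left, ← inner_conj_symm, hkfg, ← integral_conj]
  congr 1 with x
  simp only [map_mul, inner_conj_symm, mul_comm]

theorem IsKDualPair.ofReal_inv_mul_le {k : H₀ →L[ℂ] H} {f : X → H} {g : X → H₀}
    (hkfg : IsKDualPair μ k f g) {h₀ : H₀} (hf : Measurable fun x => inner ℂ (k h₀) (f x))
    (hg : Measurable fun x => inner ℂ h₀ (g x)) {B : ℝ}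
    (hf_bessel : ∫⁻ x, ‖inner ℂ (k h₀) (f x)‖ₑ ^ 2 ∂μ ≤ ENNReal.ofReal (B * ‖k h₀‖ ^ 2)) :
    ENNReal.ofReal (B⁻¹ * ‖k h₀‖ ^ 2) ≤ ∫⁻ x, ‖inner ℂ h₀ (g x)‖ₑ ^ 2 ∂μ := by
  refine ofReal_inv_mul_le_lintegral_enorm_sq hg.aemeasurable
    (q := fun x => inner ℂ (f x) (k h₀)) ?_ ?_ ?_
  · simpa only [Function.comp_def, inner_conj_symm] using
      (Complex.continuous_conj.measurable.comp hf).aemeasurable (μ := μ)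
  · simpa only [← ofReal_norm, norm_inner_symm] using hf_bessel
  · rw [← hkfg, inner_self_eq_norm_sq_to_K]
    norm_cast
    exact abs_of_nonneg (by positivity)

end DualPair

theorem ck_dual_pair_frames_general
    {H : Type*} [NormedAddCommGroup H] [InnerProductSpace ℂ H] [CompleteSpace H]
    {H₀ : Type*} [NormedAddCommGroup H₀] [InnerProductSpace ℂ H₀] [CompleteSpace H₀]
    {X : Type*} [MeasurableSpace X] (μ : Measure X)
    (k : H₀ →L[ℂ] H) (f : X → H) (g : X → H₀)
    (hfmeas : ∀ h : H, Measurable fun x => (inner ℂ h (f x) : ℂ))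
    (hgmeas : ∀ h₀ : H₀, Measurable fun x => (inner ℂ h₀ (g x) : ℂ))
    (B : ℝ)
    (hfBessel : ∀ h : H,
      ∫⁻ x, (‖(inner ℂ h (f x) : ℂ)‖₊ : ℝ≥0∞) ^ 2 ∂μ ≤ ENNReal.ofReal (B * ‖h‖ ^ 2))
    (B' : ℝ)
    (hgBessel : ∀ h₀ : H₀,
      ∫⁻ x, (‖(inner ℂ h₀ (g x) : ℂ)‖₊ : ℝ≥0∞) ^ 2 ∂μ ≤ ENNReal.ofReal (B' * ‖h₀‖ ^ 2))
    (hdual : ∀ (h₀ : H₀) (h : H),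
      (inner ℂ (k h₀) h : ℂ) = ∫ x, (inner ℂ h₀ (g x) : ℂ) * (inner ℂ (f x) h : ℂ) ∂μ) :
    (∀ h₀ : H₀,
      ENNReal.ofReal (B⁻¹ * ‖k h₀‖ ^ 2) ≤
        ∫⁻ x, (‖(inner ℂ h₀ (g x) : ℂ)‖₊ : ℝ≥0∞) ^ 2 ∂μ) ∧
    (∀ h : H,
      ENNReal.ofReal (B'⁻¹ * ‖(ContinuousLinearMap.adjoint k) h‖ ^ 2) ≤
        ∫⁻ x, (‖(inner ℂ h (f x) : ℂ)‖₊ : ℝ≥0∞) ^ 2 ∂μ) := by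
  have hkfg : IsKDualPair μ k f g := hdual
  exact ⟨fun h₀ => hkfg.ofReal_inv_mul_le (hfmeas _) (hgmeas h₀) (hfBessel _),
    fun h => hkfg.adjoint.ofReal_inv_mul_le (hgmeas _) (hfmeas h) (hgBessel _)⟩

/-- If `f : X → H` is a c-Bessel mapping with bound `B`, `g : X → H₀` is
a c-Bessel mapping with bound `B'`, and `f, g` form a ck-dual pair
(`⟨k h₀, h⟩ = ∫ ⟨h₀, g x⟩ ⟨f x, h⟩ dμ`), then `g` is a ck*-frame for `H₀` with lower
bound `B⁻¹` and `f` is a ck-frame for `H` with lower bound `B'⁻¹`. -/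
theorem ck_dual_pair_frames
    {H : Type*} [NormedAddCommGroup H] [InnerProductSpace ℂ H] [CompleteSpace H]
    {H₀ : Type*} [NormedAddCommGroup H₀] [InnerProductSpace ℂ H₀] [CompleteSpace H₀]
    {X : Type*} [MeasurableSpace X] (μ : Measure X) [SigmaFinite μ]
    (k : H₀ →L[ℂ] H) (f : X → H) (g : X → H₀)
    (hfmeas : ∀ h : H, Measurable fun x => (inner ℂ h (f x) : ℂ))
    (hgmeas : ∀ h₀ : H₀, Measurable fun x => (inner ℂ h₀ (g x) : ℂ))
    (B : ℝ) (hB : 0 < B)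
    (hfBessel : ∀ h : H,
      ∫⁻ x, (‖(inner ℂ h (f x) : ℂ)‖₊ : ℝ≥0∞) ^ 2 ∂μ ≤ ENNReal.ofReal (B * ‖h‖ ^ 2))
    (B' : ℝ) (hB' : 0 < B')
    (hgBessel : ∀ h₀ : H₀,
      ∫⁻ x, (‖(inner ℂ h₀ (g x) : ℂ)‖₊ : ℝ≥0∞) ^ 2 ∂μ ≤ ENNReal.ofReal (B' * ‖h₀‖ ^ 2))
    (hdual : ∀ (h₀ : H₀) (h : H),
      (inner ℂ (k h₀) h : ℂ) = ∫ x, (inner ℂ h₀ (g x) : ℂ) * (inner ℂ (f x) h : ℂ) ∂μ) :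
    (∀ h₀ : H₀,
      ENNReal.ofReal (B⁻¹ * ‖k h₀‖ ^ 2) ≤
        ∫⁻ x, (‖(inner ℂ h₀ (g x) : ℂ)‖₊ : ℝ≥0∞) ^ 2 ∂μ) ∧
    (∀ h : H,
      ENNReal.ofReal (B'⁻¹ * ‖(ContinuousLinearMap.adjoint k) h‖ ^ 2) ≤
        ∫⁻ x, (‖(inner ℂ h (f x) : ℂ)‖₊ : ℝ≥0∞) ^ 2 ∂μ) :=
  ck_dual_pair_frames_general μ k f g hfmeas hgmeas B hfBessel B' hgBessel hdual
end

section
/- Let H and H₀ be complex Hilbert spaces, (X,μ) a σ-finite measure space, k : H₀ → H a bounded linear operator with closed range, and f : X → H a Bochner integrable, weakly measurable map that is a ck-frame for H with respect to H₀ with bounds A, B. Let π denote the orthogonal projection of H onto the (closed) range of k. Then there exist a weakly measurable map g : X → H₀ which is a c-Bessel mapping for H₀ and a constant D > 0 such that: (i) g is a ck-dual of π∘f, i.e., ⟨k*(h), h₀⟩ = ∫_X ⟨h, π(f(x))⟩ ⟨g(x), h₀⟩ dμ(x) for all h ∈ H and h₀ ∈ H₀; and (ii) B⁻¹‖k h₀‖²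 ≤ ∫_X |⟨h₀, g(x)⟩|² dμ(x) ≤ D‖h₀‖² for all h₀ ∈ H₀, so that g is a ck*-frame for H₀ with respect to H with lower bound B⁻¹. -/
/-!
The analysis operator `Θ h = ⟪f ·, h⟫` is bounded `H → L²(μ)` by the Bessel bound, and on the
closed subspace `R(k)` it is bounded below: there `A ‖k* v‖² ≤ ‖Θ v‖²`, while `‖v‖ ≤ C ‖k* v‖`
by the open mapping theorem applied to `k : H₀ → R(k)`. Hence the frame operator `Θ*Θ`
restricted to `R(k)` has a bounded left inverse `M`, so `⟪Θ v, Θ (M* w)⟫ = ⟪v, w⟫` for `v ∈ R(k)`,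
and `g x = k* (M (f x))` is the required dual: `⟪h₀, g x⟫ = ⟪M* k h₀, f x⟫`. Taking
`v = w = k h₀`, Cauchy–Schwarz and the Bessel bound give `‖k h₀‖² ≤ B ‖Θ (M* k h₀)‖²`.
-/

open MeasureTheory ContinuousLinearMap
open scoped ENNReal InnerProductSpace

theorem AntilipschitzWith.hasLeftInverse {𝕜 E F : Type*} [RCLike 𝕜]
    [NormedAddCommGroup E] [NormedSpace 𝕜 E] [CompleteSpace E]
    [NormedAddCommGroup F] [InnerProductSpace 𝕜 F] [CompleteSpace F]
    {L : E →L[𝕜] F} {c : NNReal} (hL : AntilipschitzWith c L) : L.HasLeftInverse := by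
  have : CompleteSpace L.range := hL.completeSpace_range_clm
  exact .of_injective_of_isClosed_range_of_closedComplement_range hL.injective
    (hL.isClosed_range L.uniformContinuous)
    ⟨L.range.orthogonalProjectionOnto, Submodule.orthogonalProjectionOnto_mem_subspace_eq_self⟩

section Hilbert

variable {𝕜 E F : Type*} [RCLike 𝕜] [NormedAddCommGroup E] [InnerProductSpace 𝕜 E]
  [NormedAddCommGroup F] [InnerProductSpace 𝕜 F]

theorem norm_sq_le_mul_norm_sq_of_inner_eq {B : ℝ} (hB : 0 ≤ B) {v : E} {a b : F}
    (ha : ‖a‖ ^ 2 ≤ B * ‖v‖ ^ 2) (hab : ⟪a, b⟫_𝕜 = ⟪v, v⟫_𝕜) : ‖v‖ ^ 2 ≤ B * ‖b‖ ^ 2 := by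
  have h : ‖v‖ ^ 2 * ‖v‖ ^ 2 ≤ ‖v‖ ^ 2 * (B * ‖b‖ ^ 2) := calc
    ‖v‖ ^ 2 * ‖v‖ ^ 2 = ‖⟪a, b⟫_𝕜‖ ^ 2 := by
      rw [hab, inner_self_eq_norm_sq_to_K, norm_pow, RCLike.norm_ofReal, abs_norm]; ring
    _ ≤ ‖a‖ ^ 2 * ‖b‖ ^ 2 := by rw [← mul_pow]; gcongr; exact norm_inner_le_norm a b
    _ ≤ B * ‖v‖ ^ 2 * ‖b‖ ^ 2 := by gcongr
    _ = ‖v‖ ^ 2 * (B * ‖b‖ ^ 2) := by ring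
  rcases (norm_nonneg v).eq_or_lt with hv | hv
  · rw [← hv, sq, zero_mul]; exact mul_nonneg hB (sq_nonneg _)
  · exact le_of_mul_le_mul_left h (by positivity)

variable [CompleteSpace E] [CompleteSpace F]

theorem exists_norm_le_mul_norm_adjoint (k : E →L[𝕜] F) (hk : IsClosed (Set.range k)) :
    ∃ C > 0, ∀ v ∈ Set.range k, ‖v‖ ≤ C * ‖adjoint k v‖ := by
  have : CompleteSpace k.range := hk.completeSpace_coe
  obtain ⟨C, hC, hpre⟩ := k.rangeRestrict.exists_preimage_norm_le k.surjective_rangeRestrict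
  refine ⟨C, hC, ?_⟩
  rintro _ ⟨x, rfl⟩
  obtain ⟨y, hy, hyC⟩ := hpre ⟨k x, x, rfl⟩
  replace hy : k y = k x := congrArg Subtype.val hy
  have : ‖k x‖ ^ 2 ≤ ‖adjoint k (k x)‖ * (C * ‖k x‖) := calc
    ‖k x‖ ^ 2 = RCLike.re ⟪adjoint k (k x), y⟫_𝕜 := by
      rw [adjoint_inner_left, hy, inner_self_eq_norm_sq]
    _ ≤ ‖adjoint k (k x)‖ * ‖y‖ := re_inner_le_norm _ _
    _ ≤ ‖adjoint k (k x)‖ * (C * ‖k x‖) := by gcongr; exact hyC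
  rcases (norm_nonneg (k x)).eq_or_lt with hx | hx
  · rw [← hx]; positivity
  · nlinarith

theorem exists_pos_mul_norm_sq_le_of_isClosed_range {G : Type*} [Norm G] (k : E →L[𝕜] F)
    (hk : IsClosed (Set.range k)) {A : ℝ} (hA : 0 < A) {T : F → G}
    (hT : ∀ v, A * ‖adjoint k v‖ ^ 2 ≤ ‖T v‖ ^ 2) :
    ∃ c > 0, ∀ v ∈ Set.range k, c * ‖v‖ ^ 2 ≤ ‖T v‖ ^ 2 := by
  obtain ⟨C, hC, hkC⟩ := exists_norm_le_mul_norm_adjoint k hk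
  refine ⟨A / C ^ 2, by positivity, fun v hv => ?_⟩
  calc A / C ^ 2 * ‖v‖ ^ 2 ≤ A / C ^ 2 * (C * ‖adjoint k v‖) ^ 2 := by gcongr; exact hkC v hv
    _ = A * ‖adjoint k v‖ ^ 2 := by field_simp
    _ ≤ ‖T v‖ ^ 2 := hT v

theorem exists_inner_apply_map_eq_inner (Θ : E →L[𝕜] F) (K : Submodule 𝕜 E) [CompleteSpace K]
    {c : ℝ} (hc : 0 < c) (hΘ : ∀ v ∈ K, c * ‖v‖ ^ 2 ≤ ‖Θ v‖ ^ 2) :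
    ∃ N : E →L[𝕜] E, ∀ v ∈ K, ∀ w, ⟪Θ v, Θ (N w)⟫_𝕜 = ⟪v, w⟫_𝕜 := by
  set L : K →L[𝕜] E := (adjoint Θ ∘L Θ) ∘L K.subtypeL
  have hL : ∀ v : K, ‖v‖ ≤ Real.toNNReal c⁻¹ * ‖L v‖ := by
    intro v
    have : c * ‖v‖ ^ 2 ≤ ‖L v‖ * ‖v‖ := calc
      c * ‖v‖ ^ 2 ≤ ‖Θ v‖ ^ 2 := hΘ v v.2
      _ = RCLike.re ⟪L v, v⟫_𝕜 := by
        rw [← inner_self_eq_norm_sq (𝕜 := 𝕜), ← adjoint_inner_left]; rfl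
      _ ≤ ‖L v‖ * ‖v‖ := re_inner_le_norm _ _
    rw [Real.coe_toNNReal _ (inv_nonneg.2 hc.le), inv_mul_eq_div, le_div_iff₀' hc]
    rcases (norm_nonneg v).eq_or_lt with hv | hv
    · rw [← hv, mul_zero]; exact norm_nonneg _
    · nlinarith
  obtain ⟨M, hM⟩ := (L.antilipschitz_of_bound hL).hasLeftInverse
  refine ⟨adjoint (K.subtypeL ∘L M), fun v hv w => ?_⟩
  rw [← adjoint_inner_left, adjoint_inner_right]
  exact congrArg (fun z : K => ⟪(z : E), w⟫_𝕜) (hM ⟨v, hv⟩)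

end Hilbert

section AnalysisOperator

variable {𝕜 H X : Type*} [RCLike 𝕜] [NormedAddCommGroup H] [InnerProductSpace 𝕜 H]
  [MeasurableSpace X] {μ : Measure X}

theorem eLpNorm_two_sq {F : Type*} [NormedAddCommGroup F] (φ : X → F) :
    eLpNorm φ 2 μ ^ 2 = ∫⁻ x, ‖φ x‖ₑ ^ 2 ∂μ := by
  simpa using eLpNorm_nnreal_pow_eq_lintegral (f := φ) (μ := μ) (p := 2) two_ne_zero

theorem ofReal_norm_toLp_sq {F : Type*} [NormedAddCommGroup F] {φ : X → F} (hφ : MemLp φ 2 μ) :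
    ENNReal.ofReal (‖hφ.toLp φ‖ ^ 2) = ∫⁻ x, ‖φ x‖ₑ ^ 2 ∂μ := by
  rw [ENNReal.ofReal_pow (norm_nonneg _), ofReal_norm, Lp.enorm_toLp, eLpNorm_two_sq]

variable {f : X → H} {B : ℝ}

theorem lintegral_enorm_inner_apply_sq (h : H) :
    ∫⁻ x, ‖⟪f x, h⟫_𝕜‖ₑ ^ 2 ∂μ = ∫⁻ x, (‖⟪h, f x⟫_𝕜‖₊ : ℝ≥0∞) ^ 2 ∂μ := by
  simp_rw [← enorm_eq_nnnorm, ← ofReal_norm, norm_inner_symm]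

theorem memLp_inner_apply (hf : ∀ h : H, Measurable fun x => ⟪h, f x⟫_𝕜)
    (hB : ∀ h : H, ∫⁻ x, (‖⟪h, f x⟫_𝕜‖₊ : ℝ≥0∞) ^ 2 ∂μ ≤ ENNReal.ofReal (B * ‖h‖ ^ 2)) (h : H) :
    MemLp (fun x => ⟪f x, h⟫_𝕜) 2 μ := by
  refine ⟨?_, ?_⟩
  · simpa only [Function.comp_def, inner_conj_symm] using
      (RCLike.continuous_conj.measurable.comp (hf h)).aestronglyMeasurable
  · have : eLpNorm (fun x => ⟪f x, h⟫_𝕜) 2 μ ^ 2 < ∞ := by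
      rw [eLpNorm_two_sq, lintegral_enorm_inner_apply_sq]
      exact (hB h).trans_lt ENNReal.ofReal_lt_top
    simpa using this

variable (hf : ∀ h : H, Measurable fun x => ⟪h, f x⟫_𝕜)
  (hB : ∀ h : H, ∫⁻ x, (‖⟪h, f x⟫_𝕜‖₊ : ℝ≥0∞) ^ 2 ∂μ ≤ ENNReal.ofReal (B * ‖h‖ ^ 2))

theorem ofReal_norm_toLp_inner_sq (h : H) :
    ENNReal.ofReal (‖(memLp_inner_apply hf hB h).toLp (fun x => ⟪f x, h⟫_𝕜)‖ ^ 2) =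
      ∫⁻ x, (‖⟪h, f x⟫_𝕜‖₊ : ℝ≥0∞) ^ 2 ∂μ := by
  rw [ofReal_norm_toLp_sq, lintegral_enorm_inner_apply_sq]

theorem norm_toLp_inner_sq_le (hB0 : 0 ≤ B) (h : H) :
    ‖(memLp_inner_apply hf hB h).toLp (fun x => ⟪f x, h⟫_𝕜)‖ ^ 2 ≤ B * ‖h‖ ^ 2 := by
  rw [← ENNReal.ofReal_le_ofReal_iff (by positivity), ofReal_norm_toLp_inner_sq hf hB]
  exact hB h

noncomputable def analysisOp (hB0 : 0 ≤ B) : H →L[𝕜] Lp 𝕜 2 μ :=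
  LinearMap.mkContinuous
    { toFun := fun h => (memLp_inner_apply hf hB h).toLp (fun x => ⟪f x, h⟫_𝕜)
      map_add' := fun a b => by
        rw [← MemLp.toLp_add]
        exact MemLp.toLp_congr _ _ (ae_of_all _ fun x => inner_add_right _ _ _)
      map_smul' := fun c a => by
        rw [RingHom.id_apply, ← MemLp.toLp_const_smul]
        exact MemLp.toLp_congr _ _ (ae_of_all _ fun x => inner_smul_right _ _ _) }
    (Real.sqrt B) fun h => by
      rw [← Real.sqrt_sq (norm_nonneg h), ← Real.sqrt_mul hB0]
      exact Real.le_sqrt_of_sq_le (norm_toLp_inner_sq_le hf hB hB0 h)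

variable (hB0 : 0 ≤ B)

theorem analysisOp_apply (h : H) :
    analysisOp hf hB hB0 h = (memLp_inner_apply hf hB h).toLp (fun x => ⟪f x, h⟫_𝕜) := rfl

theorem ofReal_norm_analysisOp_sq (h : H) :
    ENNReal.ofReal (‖analysisOp hf hB hB0 h‖ ^ 2) = ∫⁻ x, (‖⟪h, f x⟫_𝕜‖₊ : ℝ≥0∞) ^ 2 ∂μ :=
  ofReal_norm_toLp_inner_sq hf hB h

theorem le_norm_analysisOp_sq {a : ℝ} {h : H}
    (ha : ENNReal.ofReal a ≤ ∫⁻ x, (‖⟪h, f x⟫_𝕜‖₊ : ℝ≥0∞) ^ 2 ∂μ) :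
    a ≤ ‖analysisOp hf hB hB0 h‖ ^ 2 := by
  rwa [← ENNReal.ofReal_le_ofReal_iff (sq_nonneg _), ofReal_norm_analysisOp_sq]

theorem norm_analysisOp_sq_le (h : H) : ‖analysisOp hf hB hB0 h‖ ^ 2 ≤ B * ‖h‖ ^ 2 :=
  norm_toLp_inner_sq_le hf hB hB0 h

theorem inner_analysisOp_apply_ae (a b : H) :
    (fun x => ⟪analysisOp hf hB hB0 a x, analysisOp hf hB hB0 b x⟫_𝕜) =ᵐ[μ]
      fun x => ⟪a, f x⟫_𝕜 * ⟪f x, b⟫_𝕜 := by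
  filter_upwards [MemLp.coeFn_toLp (memLp_inner_apply hf hB a),
    MemLp.coeFn_toLp (memLp_inner_apply hf hB b)] with x ha hb
  rw [analysisOp_apply, analysisOp_apply, ha, hb, RCLike.inner_apply, inner_conj_symm, mul_comm]

theorem inner_analysisOp (a b : H) :
    ⟪analysisOp hf hB hB0 a, analysisOp hf hB hB0 b⟫_𝕜 = ∫ x, ⟪a, f x⟫_𝕜 * ⟪f x, b⟫_𝕜 ∂μ := by
  rw [L2.inner_def]
  exact integral_congr_ae (inner_analysisOp_apply_ae hf hB hB0 a b)

end AnalysisOperator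

theorem exists_ck_dual_of_projection_general
    {H : Type*} [NormedAddCommGroup H] [InnerProductSpace ℂ H] [CompleteSpace H]
    {H₀ : Type*} [NormedAddCommGroup H₀] [InnerProductSpace ℂ H₀] [CompleteSpace H₀]
    {X : Type*} [MeasurableSpace X] (μ : Measure X)
    (k : H₀ →L[ℂ] H) (hclosed : IsClosed (Set.range k))
    (f : X → H) (hfmeas : ∀ h : H, Measurable fun x => (inner ℂ h (f x) : ℂ))
    (A B : ℝ) (hA : 0 < A) (hB : 0 < B)
    (hlow : ∀ h : H,
      ENNReal.ofReal (A * ‖(ContinuousLinearMap.adjoint k) h‖ ^ 2) ≤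
        ∫⁻ x, (‖(inner ℂ h (f x) : ℂ)‖₊ : ℝ≥0∞) ^ 2 ∂μ)
    (hup : ∀ h : H,
      ∫⁻ x, (‖(inner ℂ h (f x) : ℂ)‖₊ : ℝ≥0∞) ^ 2 ∂μ ≤ ENNReal.ofReal (B * ‖h‖ ^ 2))
    (π : H →L[ℂ] H)
    (hπ_mem : ∀ h : H, π h ∈ Set.range k)
    (hπ_orth : ∀ h : H, ∀ w ∈ Set.range k, (inner ℂ (h - π h) w : ℂ) = 0) :
    ∃ g : X → H₀,
      (∀ h₀ : H₀, Measurable fun x => (inner ℂ h₀ (g x) : ℂ)) ∧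
      ∃ D : ℝ, 0 < D ∧
        (∀ (h : H) (h₀ : H₀),
          Integrable (fun x => (inner ℂ h (π (f x)) : ℂ) * (inner ℂ (g x) h₀ : ℂ)) μ ∧
          (inner ℂ ((ContinuousLinearMap.adjoint k) h) h₀ : ℂ) =
            ∫ x, (inner ℂ h (π (f x)) : ℂ) * (inner ℂ (g x) h₀ : ℂ) ∂μ) ∧
        (∀ h₀ : H₀,
          ENNReal.ofReal (B⁻¹ * ‖k h₀‖ ^ 2) ≤
              ∫⁻ x, (‖(inner ℂ h₀ (g x) : ℂ)‖₊ : ℝ≥0∞) ^ 2 ∂μ ∧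
            ∫⁻ x, (‖(inner ℂ h₀ (g x) : ℂ)‖₊ : ℝ≥0∞) ^ 2 ∂μ ≤
              ENNReal.ofReal (D * ‖h₀‖ ^ 2)) := by
  have : CompleteSpace k.range := hclosed.completeSpace_coe
  have hπ : ∀ h y, ⟪h, π y⟫_ℂ = ⟪π h, y⟫_ℂ := fun h y => by
    simp only [← k.range.eq_starProjection_of_mem_of_inner_eq_zero (hπ_mem _) (hπ_orth _),
      k.range.inner_starProjection_left_eq_right]
  set Θ := analysisOp hfmeas hup hB.le
  obtain ⟨c, hc, hΘ⟩ := exists_pos_mul_norm_sq_le_of_isClosed_range k hclosed hA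
    fun h => le_norm_analysisOp_sq hfmeas hup hB.le (hlow h)
  obtain ⟨N, hN⟩ := exists_inner_apply_map_eq_inner Θ k.range hc hΘ
  have hg : ∀ h₀ x, ⟪h₀, adjoint k (adjoint N (f x))⟫_ℂ = ⟪N (k h₀), f x⟫_ℂ := fun h₀ x => by
    rw [adjoint_inner_right, adjoint_inner_right]
  have hdual : ∀ h h₀, (fun x => ⟪h, π (f x)⟫_ℂ * ⟪adjoint k (adjoint N (f x)), h₀⟫_ℂ) =
      fun x => ⟪π h, f x⟫_ℂ * ⟪f x, N (k h₀)⟫_ℂ := fun h h₀ => by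
    simp_rw [hπ, adjoint_inner_left]
  refine ⟨fun x => adjoint k (adjoint N (f x)),
    fun h₀ => by simpa only [hg] using hfmeas (N (k h₀)), B * ‖N ∘L k‖ ^ 2 + 1, by positivity, fun h h₀ => ⟨?_, ?_⟩, fun h₀ => ⟨?_, ?_⟩⟩
  · rw [hdual]
    exact (L2.integrable_inner _ _).congr (inner_analysisOp_apply_ae hfmeas hup hB.le _ _)
  · rw [hdual, ← inner_analysisOp hfmeas hup hB.le, hN _ (hπ_mem h), adjoint_inner_left,
      ← sub_eq_zero, ← inner_sub_left]
    exact hπ_orth h _ ⟨h₀, rfl⟩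
  · simp_rw [hg, ← ofReal_norm_analysisOp_sq hfmeas hup hB.le]
    refine ENNReal.ofReal_le_ofReal ((inv_mul_le_iff₀ hB).2 ?_)
    exact norm_sq_le_mul_norm_sq_of_inner_eq hB.le (norm_analysisOp_sq_le hfmeas hup hB.le (k h₀))
      (hN (k h₀) ⟨h₀, rfl⟩ (k h₀))
  · simp_rw [hg]
    refine (hup _).trans (ENNReal.ofReal_le_ofReal ?_)
    calc B * ‖N (k h₀)‖ ^ 2 ≤ B * (‖N ∘L k‖ * ‖h₀‖) ^ 2 := by gcongr; exact (N ∘L k).le_opNorm h₀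
      _ ≤ (B * ‖N ∘L k‖ ^ 2 + 1) * ‖h₀‖ ^ 2 := by nlinarith [sq_nonneg ‖h₀‖]

/-- Let `k : H₀ → H` be a bounded operator with closed range and let
`f : X → H` be a Bochner integrable, weakly measurable ck-frame for `H` with respect to
`H₀` with bounds `A, B`. Let `π` be the orthogonal projection of `H` onto `R(k)`
(characterized by `π h ∈ R(k)` and `h - π h ⟂ R(k)`). Then there exist a weakly
measurable c-Bessel mapping `g : X → H₀` and `D > 0` such that
(i) `g` is a ck-dual of `π ∘ f`: `⟨k* h, h₀⟩ = ∫ ⟨h, π (f x)⟩ ⟨g x, h₀⟩ dμ` for all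
`h ∈ H`, `h₀ ∈ H₀`; and
(ii) `B⁻¹ ‖k h₀‖² ≤ ∫ |⟨h₀, g x⟩|² dμ ≤ D ‖h₀‖²` for all `h₀ ∈ H₀`. -/
theorem exists_ck_dual_of_projection
    {H : Type*} [NormedAddCommGroup H] [InnerProductSpace ℂ H] [CompleteSpace H]
    {H₀ : Type*} [NormedAddCommGroup H₀] [InnerProductSpace ℂ H₀] [CompleteSpace H₀]
    {X : Type*} [MeasurableSpace X] (μ : Measure X) [SigmaFinite μ]
    (k : H₀ →L[ℂ] H) (hclosed : IsClosed (Set.range k))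
    (f : X → H) (hf_int : Integrable f μ)
    (hfmeas : ∀ h : H, Measurable fun x => (inner ℂ h (f x) : ℂ))
    (A B : ℝ) (hA : 0 < A) (hB : 0 < B)
    (hlow : ∀ h : H,
      ENNReal.ofReal (A * ‖(ContinuousLinearMap.adjoint k) h‖ ^ 2) ≤
        ∫⁻ x, (‖(inner ℂ h (f x) : ℂ)‖₊ : ℝ≥0∞) ^ 2 ∂μ)
    (hup : ∀ h : H,
      ∫⁻ x, (‖(inner ℂ h (f x) : ℂ)‖₊ : ℝ≥0∞) ^ 2 ∂μ ≤ ENNReal.ofReal (B * ‖h‖ ^ 2))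
    (π : H →L[ℂ] H)
    (hπ_mem : ∀ h : H, π h ∈ Set.range k)
    (hπ_orth : ∀ h : H, ∀ w ∈ Set.range k, (inner ℂ (h - π h) w : ℂ) = 0) :
    ∃ g : X → H₀,
      (∀ h₀ : H₀, Measurable fun x => (inner ℂ h₀ (g x) : ℂ)) ∧
      ∃ D : ℝ, 0 < D ∧
        (∀ (h : H) (h₀ : H₀),
          Integrable (fun x => (inner ℂ h (π (f x)) : ℂ) * (inner ℂ (g x) h₀ : ℂ)) μ ∧
          (inner ℂ ((ContinuousLinearMap.adjoint k) h) h₀ : ℂ) =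
            ∫ x, (inner ℂ h (π (f x)) : ℂ) * (inner ℂ (g x) h₀ : ℂ) ∂μ) ∧
        (∀ h₀ : H₀,
          ENNReal.ofReal (B⁻¹ * ‖k h₀‖ ^ 2) ≤
              ∫⁻ x, (‖(inner ℂ h₀ (g x) : ℂ)‖₊ : ℝ≥0∞) ^ 2 ∂μ ∧
            ∫⁻ x, (‖(inner ℂ h₀ (g x) : ℂ)‖₊ : ℝ≥0∞) ^ 2 ∂μ ≤
              ENNReal.ofReal (D * ‖h₀‖ ^ 2)) :=
  exists_ck_dual_of_projection_general μ k hclosed f hfmeas A B hA hB hlow hup π hπ_mem hπ_orth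
end
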